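/- arXiv:2308.15403 — 7 statements merged into one kernel-verified Lean document; each statement's English description precedes it below -/
import Mathlib

section
/- Let C : {-1,1}^k → {-1,1}^n be a (3, δ, ε)-normally decodable code with associated 3-uniform hypergraph matchings H_1, …, H_k, and let m := Σ_{i=1}^k |H_i|. For b ∈ {-1,1}^k define ψ_b(x) := (1/m) Σ_{i=1}^k b_i Σ_{C∈H_i} ∏_{v∈C} x_v and val(ψ_b) := max_{x∈{-1,1}^n} ψ_b(x). Then E_{b uniform in {-1,1}^k}[val(ψ_b)] ≥ 2ε. -/
open Finset
open scoped Classical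

noncomputable section

/-- The map sending a Boolean to the corresponding element of `{-1, 1} ⊆ ℝ`. -/
def pmo (b : Bool) : ℝ := if b then 1 else -1

/-- `H` is a `q`-uniform hypergraph matching on `[n]`. -/
def IsMatching {n : ℕ} (q : ℕ) (H : Finset (Finset (Fin n))) : Prop :=
  (∀ C ∈ H, C.card = q) ∧ Set.Pairwise (H : Set (Finset (Fin n))) Disjoint

/-- For a `(3, δ, ε)`-normally decodable code `Enc` with associated matchings `H i`,
letting `m = Σᵢ |H i|`, `ψ_b(x) = (1/m) Σᵢ b_i Σ_{C ∈ H i} ∏_{v ∈ C} x_v` and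
`val(ψ_b) = max_{x ∈ {-1,1}ⁿ} ψ_b(x)`, the expectation of `val(ψ_b)` over a uniformly
random `b ∈ {-1,1}^k` is at least `2ε`. -/
theorem expected_val_lower_bound
    (k n : ℕ) (hk : 0 < k) (hn : 0 < n) (δ ε : ℝ) (hδ : 0 < δ) (hε : 0 < ε)
    (Enc : (Fin k → Bool) → Fin n → Bool)
    (H : Fin k → Finset (Finset (Fin n)))
    (hmatch : ∀ i, IsMatching 3 (H i))
    (hsize : ∀ i, δ * n ≤ ((H i).card : ℝ))
    (hdec : ∀ i, ∀ C ∈ H i,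
      (1 / 2 + ε : ℝ) ≤
        ((Finset.univ.filter (fun b : Fin k → Bool =>
          pmo (b i) = ∏ v ∈ C, pmo (Enc b v))).card : ℝ) / 2 ^ k)
    (m : ℕ) (hm : m = ∑ i, (H i).card) :
    2 * ε ≤ (∑ b : Fin k → Bool,
        ⨆ x : Fin n → Bool,
          (1 / (m : ℝ)) * ∑ i, pmo (b i) * ∑ C ∈ H i, ∏ v ∈ C, pmo (x v)) / 2 ^ k := by
  classical
  have h2k : (0 : ℝ) < 2 ^ k := by positivity
  have hcard : (Finset.univ : Finset (Fin k → Bool)).card = 2 ^ k := by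
    simp [Fintype.card_fun]
  have hHpos : ∀ i : Fin k, 0 < (H i).card := by
    intro i
    have h1 : (0 : ℝ) < δ * n := mul_pos hδ (by exact_mod_cast hn)
    have := lt_of_lt_of_le h1 (hsize i)
    exact_mod_cast this
  have hmpos : 0 < m := by
    rw [hm]
    exact Finset.sum_pos (fun i _ => hHpos i) ⟨⟨0, hk⟩, Finset.mem_univ _⟩
  have hmR : (0 : ℝ) < (m : ℝ) := by exact_mod_cast hmpos
  -- key per-edge bound
  have key : ∀ i : Fin k, ∀ C ∈ H i,
      2 * ε * 2 ^ k ≤ ∑ b : Fin k → Bool, pmo (b i) * ∏ v ∈ C, pmo (Enc b v) := by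
    intro i C hC
    have hterm : ∀ b : Fin k → Bool,
        pmo (b i) * ∏ v ∈ C, pmo (Enc b v)
          = 2 * (if pmo (b i) = ∏ v ∈ C, pmo (Enc b v) then (1 : ℝ) else 0) - 1 := by
      intro b
      have hP : (∏ v ∈ C, pmo (Enc b v)) * (∏ v ∈ C, pmo (Enc b v)) = 1 := by
        rw [← Finset.prod_mul_distrib]
        apply Finset.prod_eq_one
        intro v _
        cases Enc b v <;> simp [pmo]
      rcases mul_self_eq_one_iff.mp hP with h | h <;> rw [h] <;>
        cases hbi : b i <;> simp [pmo, hbi] <;> norm_num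
    have hsum : ∑ b : Fin k → Bool, pmo (b i) * ∏ v ∈ C, pmo (Enc b v)
        = 2 * ((Finset.univ.filter (fun b : Fin k → Bool =>
            pmo (b i) = ∏ v ∈ C, pmo (Enc b v))).card : ℝ) - 2 ^ k := by
      simp_rw [hterm]
      rw [Finset.sum_sub_distrib, ← Finset.mul_sum, Finset.sum_boole, Finset.sum_const,
        hcard]
      simp
    rw [hsum]
    have hd := hdec i C hC
    rw [le_div_iff₀ h2k] at hd
    linarith
  -- pointwise: value at Enc b is at most the sup
  have step : ∀ b : Fin k → Bool,
      (1 / (m : ℝ)) * ∑ i, pmo (b i) * ∑ C ∈ H i, ∏ v ∈ C, pmo (Enc b v)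
        ≤ ⨆ x : Fin n → Bool,
            (1 / (m : ℝ)) * ∑ i, pmo (b i) * ∑ C ∈ H i, ∏ v ∈ C, pmo (x v) :=
    fun b => le_ciSup (f := fun x : Fin n → Bool =>
      (1 / (m : ℝ)) * ∑ i, pmo (b i) * ∑ C ∈ H i, ∏ v ∈ C, pmo (x v))
      (Set.Finite.bddAbove (Set.finite_range _)) (Enc b)
  rw [le_div_iff₀ h2k]
  have expand : ∑ b : Fin k → Bool,
      (1 / (m : ℝ)) * ∑ i, pmo (b i) * ∑ C ∈ H i, ∏ v ∈ C, pmo (Enc b v)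
      = (1 / (m : ℝ)) * ∑ i, ∑ C ∈ H i,
          ∑ b : Fin k → Bool, pmo (b i) * ∏ v ∈ C, pmo (Enc b v) := by
    rw [← Finset.mul_sum]
    congr 1
    rw [Finset.sum_comm]
    refine Finset.sum_congr rfl fun i _ => ?_
    simp_rw [Finset.mul_sum]
    rw [Finset.sum_comm]
  have lower : (m : ℝ) * (2 * ε * 2 ^ k)
      ≤ ∑ i, ∑ C ∈ H i, ∑ b : Fin k → Bool, pmo (b i) * ∏ v ∈ C, pmo (Enc b v) := by
    have hm' : (m : ℝ) = ∑ i : Fin k, ((H i).card : ℝ) := by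
      rw [hm]; push_cast; ring
    calc (m : ℝ) * (2 * ε * 2 ^ k)
        = ∑ i : Fin k, ((H i).card : ℝ) * (2 * ε * 2 ^ k) := by
          rw [← Finset.sum_mul, ← hm']
      _ ≤ _ := by
          refine Finset.sum_le_sum fun i _ => ?_
          rw [show ((H i).card : ℝ) * (2 * ε * 2 ^ k)
              = ∑ _C ∈ H i, 2 * ε * 2 ^ k by rw [Finset.sum_const, nsmul_eq_mul]]
          exact Finset.sum_le_sum fun C hC => key i C hC
  calc 2 * ε * 2 ^ k
      = (1 / (m : ℝ)) * ((m : ℝ) * (2 * ε * 2 ^ k)) := by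
        field_simp
    _ ≤ ∑ b : Fin k → Bool,
          (1 / (m : ℝ)) * ∑ i, pmo (b i) * ∑ C ∈ H i, ∏ v ∈ C, pmo (Enc b v) := by
        rw [expand]
        exact mul_le_mul_of_nonneg_left lower (by positivity)
    _ ≤ _ := Finset.sum_le_sum fun b _ => step b
end
end

section
/- Let H_1, …, H_k be 3-uniform hypergraphs on vertex set [n], let d ∈ ℕ be a threshold, and let P := {{u,v} ⊆ [n] : deg_H({u,v}) > d} where deg_H({u,v}) := Σ_{i=1}^k |{C ∈ H_i : {u,v} ⊆ C}|. Then there exist 3-uniform hypergraphs H'_1, …, H'_k and bipartite graphs G_1, …, G_k such that: (1) each G_i is a bipartite graph with left vertex set [n] and right vertex set P; (2) H'_i ⊆ H_i for each i ∈ [k]; (3) for each i ∈ [k] there is a bijection between the hyperedges C ∈ H_i \ H'_i and the edges of G_i, given by mapping the edge (w, {u,v}) of G_i to the hyperedge C = {u,v,w}; (4) for all u ≠ v ∈ [n], Σ_{i=1}^k |{C ∈ H'_i : {u,v} ⊆ C}| ≤ d; (5) if H_i is a matching (its hyperedges are pairwise disjoint), then H'_i is a matching and G_i is a matching (its edges are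 pairwise vertex-disjoint). -/
open Finset
open scoped Classical

noncomputable section

/-- The degree of a set `p ⊆ [n]` in the union hypergraph `H = ∪ᵢ H i`:
the number of hyperedges (counted over all `i`) containing `p`. -/
def degH {n k : ℕ} (H : Fin k → Finset (Finset (Fin n))) (p : Finset (Fin n)) : ℕ :=
  ∑ i, ((H i).filter (fun C => p ⊆ C)).card

/-- `C` contains a heavy pair. -/
def Bad {n k : ℕ} (H : Fin k → Finset (Finset (Fin n))) (d : ℕ)
    (C : Finset (Fin n)) : Prop :=
  ∃ p ∈ C.powerset, p.card = 2 ∧ d < degH H p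

/-- Pick a heavy pair in `C` (junk value `∅` if none). -/
noncomputable def pickP {n k : ℕ} (H : Fin k → Finset (Finset (Fin n))) (d : ℕ)
    (C : Finset (Fin n)) : Finset (Fin n) :=
  if h : Bad H d C then h.choose else ∅

lemma pickP_spec {n k : ℕ} {H : Fin k → Finset (Finset (Fin n))} {d : ℕ}
    {C : Finset (Fin n)} (h : Bad H d C) :
    pickP H d C ⊆ C ∧ (pickP H d C).card = 2 ∧ d < degH H (pickP H d C) := by
  rw [pickP, dif_pos h]
  obtain ⟨hmem, h2, hd⟩ := h.choose_spec
  exact ⟨mem_powerset.1 hmem, h2, hd⟩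

/-- **Hypergraph decomposition.** Given `3`-uniform hypergraphs `H 1, …, H k` on `[n]`
and a threshold `d`, with `P` the set of pairs of degree exceeding `d`, there are
`3`-uniform hypergraphs `H'` and bipartite graphs `G` (edges `(w, p)` with `w ∈ [n]`
and `p ∈ P`) such that: (1) every right endpoint of an edge of `G i` lies in `P`;
(2) `H' i ⊆ H i`; (3) `(w,p) ↦ {w} ∪ p` is a bijection from the edges of `G i` onto
`H i \ H' i`; (4) every pair has degree at most `d` in `H'`; (5) if `H i` is a
matching then so are `H' i` and `G i`. -/
theorem hypergraph_decomposition (n k d : ℕ)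
    (H : Fin k → Finset (Finset (Fin n)))
    (huniform : ∀ i, ∀ C ∈ H i, C.card = 3) :
    ∃ (H' : Fin k → Finset (Finset (Fin n)))
      (G : Fin k → Finset (Fin n × Finset (Fin n))),
      (∀ i, ∀ e ∈ G i, e.2.card = 2 ∧ d < degH H e.2) ∧
      (∀ i, H' i ⊆ H i) ∧
      (∀ i, Set.BijOn (fun e : Fin n × Finset (Fin n) => insert e.1 e.2)
        (G i : Set (Fin n × Finset (Fin n))) ((H i \ H' i : Finset (Finset (Fin n))) :
          Set (Finset (Fin n)))) ∧
      (∀ u v : Fin n, u ≠ v → degH H' {u, v} ≤ d) ∧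
      (∀ i, IsMatching 3 (H i) →
        IsMatching 3 (H' i) ∧
        Set.Pairwise (G i : Set (Fin n × Finset (Fin n)))
          (fun e e' => e.1 ≠ e'.1 ∧ e.2 ≠ e'.2)) := by
  classical
  set H' : Fin k → Finset (Finset (Fin n)) :=
    fun i => (H i).filter (fun C => ¬ Bad H d C) with hH'
  have hsub : ∀ i, H' i ⊆ H i := fun i => filter_subset _ _
  have hdiff : ∀ i C, C ∈ H i \ H' i ↔ C ∈ H i ∧ Bad H d C := by
    intro i C
    simp only [hH', mem_sdiff, mem_filter, not_and, not_not]
    constructor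
    · rintro ⟨hC, h2⟩; exact ⟨hC, h2 hC⟩
    · rintro ⟨hC, h2⟩; exact ⟨hC, fun _ => h2⟩
  have hkey : ∀ i C, C ∈ H i → Bad H d C → (C \ pickP H d C).card = 1 := by
    intro i C hC hB
    obtain ⟨hsub', h2, _⟩ := pickP_spec hB
    rw [card_sdiff_of_subset hsub', huniform i C hC, h2]
  have hins : ∀ i C, C ∈ H i → Bad H d C → ∀ w ∈ C \ pickP H d C,
      insert w (pickP H d C) = C := by
    intro i C hC hB w hw
    obtain ⟨hsub', h2, _⟩ := pickP_spec hB
    rw [mem_sdiff] at hw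
    apply Finset.eq_of_subset_of_card_le (insert_subset hw.1 hsub')
    rw [card_insert_of_notMem hw.2, h2, huniform i C hC]
  set G : Fin k → Finset (Fin n × Finset (Fin n)) :=
    fun i => (H i \ H' i).biUnion
      (fun C => (C \ pickP H d C).image (fun w => (w, pickP H d C))) with hG
  have hGmem : ∀ i (e : Fin n × Finset (Fin n)), e ∈ G i ↔
      ∃ C, (C ∈ H i ∧ Bad H d C) ∧ e.1 ∈ C \ pickP H d C ∧ e.2 = pickP H d C := by
    intro i e
    simp only [hG, mem_biUnion, mem_image]
    constructor
    · rintro ⟨C, hC, w, hw, rfl⟩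
      exact ⟨C, (hdiff i C).1 hC, hw, rfl⟩
    · rintro ⟨C, hC, hw, he2⟩
      exact ⟨C, (hdiff i C).2 hC, e.1, hw, by rw [← he2]⟩
  refine ⟨H', G, ?_, hsub, ?_, ?_, ?_⟩
  · -- (1)
    intro i e he
    obtain ⟨C, ⟨hC, hB⟩, _, he2⟩ := (hGmem i e).1 he
    obtain ⟨_, h2, hd⟩ := pickP_spec hB
    rw [he2]; exact ⟨h2, hd⟩
  · -- (3) BijOn
    intro i
    refine ⟨?_, ?_, ?_⟩
    · intro e he
      obtain ⟨C, ⟨hC, hB⟩, hw, he2⟩ := (hGmem i e).1 (by exact_mod_cast he)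
      have := hins i C hC hB e.1 hw
      simp only [Set.mem_setOf_eq, Finset.coe_sdiff, Set.mem_diff]
      rw [he2, this]
      have := (hdiff i C).2 ⟨hC, hB⟩
      rw [mem_sdiff] at this
      exact ⟨by exact_mod_cast this.1, by exact_mod_cast this.2⟩
    · intro e he e' he' heq
      obtain ⟨C, ⟨hC, hB⟩, hw, he2⟩ := (hGmem i e).1 (by exact_mod_cast he)
      obtain ⟨C', ⟨hC', hB'⟩, hw', he2'⟩ := (hGmem i e').1 (by exact_mod_cast he')
      simp only at heq
      have hCC' : C = C' := by
        rw [← hins i C hC hB e.1 hw, ← hins i C' hC' hB' e'.1 hw', ← he2, ← he2', heq]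
      subst hCC'
      have h1 : e.1 = e'.1 := by
        have hcard := hkey i C hC hB
        rw [card_eq_one] at hcard
        obtain ⟨a, ha⟩ := hcard
        rw [ha, mem_singleton] at hw hw'
        rw [hw, hw']
      exact Prod.ext h1 (by rw [he2, he2'])
    · intro C hC
      have hC' : C ∈ H i \ H' i := by exact_mod_cast hC
      obtain ⟨hCH, hB⟩ := (hdiff i C).1 hC'
      have hcard := hkey i C hCH hB
      rw [card_eq_one] at hcard
      obtain ⟨w, hw⟩ := hcard
      have hwmem : w ∈ C \ pickP H d C := by rw [hw]; exact mem_singleton_self w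
      refine ⟨(w, pickP H d C), ?_, ?_⟩
      · have : (w, pickP H d C) ∈ G i := (hGmem i _).2 ⟨C, ⟨hCH, hB⟩, hwmem, rfl⟩
        exact_mod_cast this
      · exact hins i C hCH hB w hwmem
  · -- (4)
    intro u v huv
    by_cases hheavy : d < degH H {u, v}
    · have hz : degH H' {u, v} = 0 := by
        rw [degH]
        apply Finset.sum_eq_zero
        intro i _
        rw [card_eq_zero, filter_eq_empty_iff]
        intro C hC hsubuv
        rw [hH', mem_filter] at hC
        exact hC.2 ⟨{u, v}, mem_powerset.2 hsubuv, card_pair huv, hheavy⟩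
      omega
    · have hle : degH H' {u, v} ≤ degH H {u, v} :=
        Finset.sum_le_sum fun i _ =>
          card_le_card (filter_subset_filter _ (hsub i))
      omega
  · -- (5)
    intro i hM
    refine ⟨⟨fun C hC => huniform i C (hsub i hC), hM.2.mono ?_⟩, ?_⟩
    · exact_mod_cast coe_subset.2 (hsub i)
    · intro e he e' he' hne
      obtain ⟨C, ⟨hC, hB⟩, hw, he2⟩ := (hGmem i e).1 (by exact_mod_cast he)
      obtain ⟨C', ⟨hC', hB'⟩, hw', he2'⟩ := (hGmem i e').1 (by exact_mod_cast he')
      by_cases hCC' : C = C'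
      · subst hCC'
        exfalso
        apply hne
        have hcard := hkey i C hC hB
        rw [card_eq_one] at hcard
        obtain ⟨a, ha⟩ := hcard
        rw [ha, mem_singleton] at hw hw'
        exact Prod.ext (by rw [hw, hw']) (by rw [he2, he2'])
      · have hdisj : Disjoint C C' := hM.2 (by exact_mod_cast hC) (by exact_mod_cast hC') hCC'
        constructor
        · intro h1
          rw [mem_sdiff] at hw hw'
          exact (Finset.disjoint_left.1 hdisj hw.1) (h1 ▸ hw'.1)
        · intro h2
          obtain ⟨hsubC, hcard2, _⟩ := pickP_spec hB
          obtain ⟨hsubC', _, _⟩ := pickP_spec hB'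
          have hne2 : (pickP H d C).Nonempty := by
            rw [← card_pos, hcard2]; norm_num
          obtain ⟨x, hx⟩ := hne2
          rw [he2, he2'] at h2
          exact (Finset.disjoint_left.1 hdisj (hsubC hx)) (hsubC' (h2 ▸ hx))
end
end

section
/- There is an absolute constant c > 0 such that the following holds. Fix positive integers n ≥ 2, k, d. Let P be a finite set with |P| ≤ nk/d, and let G_1, …, G_k be bipartite matchings with left vertex set [n] and right vertex set P. For b ∈ {-1,1}^k define the polynomial g_b(x,y) := Σ_{i=1}^k b_i Σ_{edges {v,p} ∈ G_i, v∈[n], p∈P} x_v y_p, and val(g_b) := max_{x∈{-1,1}^n, y∈{-1,1}^P} g_b(x,y). Then E_{b uniform in {-1,1}^k}[val(g_b)] ≤ c · n k · √((log n)/d). -/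
open Finset
open scoped Classical

noncomputable section

set_option linter.unusedSectionVars false

namespace TwoXorAux

open Matrix


open Matrix

lemma pmo_sq (b : Bool) : pmo b ^ 2 = 1 := by cases b <;> norm_num [pmo]

lemma pmo_neg (b : Bool) : pmo (!b) = - pmo b := by cases b <;> norm_num [pmo]

section Nice

variable {α β γ : Type*} [Fintype α] [Fintype β] [Fintype γ]

/-- entrywise-nonnegative matrices with all row and column sums at most 1. -/
def Nice (M : Matrix α β ℝ) : Prop :=
  (∀ a b, 0 ≤ M a b) ∧ (∀ a, ∑ b, M a b ≤ 1) ∧ (∀ b, ∑ a, M a b ≤ 1)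

lemma Nice.entry_le_one {M : Matrix α β ℝ} (h : Nice M) (a : α) (b : β) : M a b ≤ 1 :=
  le_trans (Finset.single_le_sum (fun c _ => h.1 a c) (Finset.mem_univ b)) (h.2.1 a)

lemma Nice.mul {M : Matrix α β ℝ} {N : Matrix β γ ℝ} (hM : Nice M) (hN : Nice N) :
    Nice (M * N) := by
  refine ⟨fun a c => ?_, fun a => ?_, fun c => ?_⟩
  · rw [Matrix.mul_apply]
    exact Finset.sum_nonneg fun b _ => mul_nonneg (hM.1 a b) (hN.1 b c)
  · have h1 : ∑ c, (M * N) a c = ∑ b, M a b * ∑ c, N b c := by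
      simp_rw [Matrix.mul_apply, Finset.mul_sum]
      exact Finset.sum_comm
    rw [h1]
    calc ∑ b, M a b * ∑ c, N b c ≤ ∑ b, M a b * 1 :=
          Finset.sum_le_sum fun b _ => mul_le_mul_of_nonneg_left (hN.2.1 b) (hM.1 a b)
      _ ≤ 1 := by simpa using hM.2.1 a
  · have h1 : ∑ a, (M * N) a c = ∑ b, (∑ a, M a b) * N b c := by
      simp_rw [Matrix.mul_apply, Finset.sum_mul]
      exact Finset.sum_comm
    rw [h1]
    calc ∑ b, (∑ a, M a b) * N b c ≤ ∑ b, 1 * N b c :=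
          Finset.sum_le_sum fun b _ =>
            mul_le_mul_of_nonneg_right (hM.2.2 b) (hN.1 b c)
      _ ≤ 1 := by simpa using hN.2.2 c

lemma Nice.one [DecidableEq α] : Nice (1 : Matrix α α ℝ) := by
  refine ⟨fun a b => ?_, fun a => ?_, fun b => ?_⟩
  · rw [Matrix.one_apply]; positivity
  · simp [Matrix.one_apply]
  · simp [Matrix.one_apply]

lemma Nice.listProd [DecidableEq β] :
    ∀ l : List (Matrix β β ℝ), (∀ M ∈ l, Nice M) → Nice l.prod
  | [], _ => by simpa using (Nice.one (α := β))
  | (M :: l), h => by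
      rw [List.prod_cons]
      exact (h M (by simp)).mul (Nice.listProd l fun N hN => h N (by simp [hN]))

lemma trace_transpose_mul_le {M C : Matrix α β ℝ} (hM : Nice M) (hC : Nice C) :
    (Mᵀ * C).trace ≤ (Fintype.card α : ℝ) := by
  have h1 : (Mᵀ * C).trace = ∑ a, ∑ b, M a b * C a b := by
    simp_rw [Matrix.trace, Matrix.diag, Matrix.mul_apply, Matrix.transpose_apply]
    exact Finset.sum_comm
  rw [h1]
  calc ∑ a, ∑ b, M a b * C a b ≤ ∑ a, ∑ b, M a b := by
        refine Finset.sum_le_sum fun a _ => Finset.sum_le_sum fun b _ => ?_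
        nlinarith [hM.1 a b, hC.1 a b, hC.entry_le_one a b]
    _ ≤ ∑ _a : α, (1 : ℝ) := Finset.sum_le_sum fun a _ => hM.2.1 a
    _ = Fintype.card α := by simp

end Nice



open Matrix


/-- Multilinear expansion of a power of a sum of scaled matrices. -/
lemma expand {β : Type*} [Fintype β] [DecidableEq β] {ι : Type*} [Fintype ι]
    (w : ι → ℝ) (B : ι → Matrix β β ℝ) :
    ∀ q : ℕ, (∑ i, w i • B i) ^ q =
      ∑ g : Fin q → ι, (∏ t, w (g t)) • ((List.finRange q).map fun t => B (g t)).prod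
  | 0 => by
      haveI : Unique (Fin 0 → ι) := ⟨⟨Fin.elim0⟩, fun f => funext fun t => t.elim0⟩
      rw [pow_zero, Fintype.sum_unique (fun g : Fin 0 → ι =>
        (∏ t, w (g t)) • ((List.finRange 0).map fun t => B (g t)).prod)]
      simp
  | (q + 1) => by
      rw [pow_succ', expand w B q, Finset.mul_sum]
      rw [← Equiv.sum_comp (Fin.consEquiv fun _ : Fin (q + 1) => ι)
        (fun g : Fin (q + 1) → ι =>
          (∏ t, w (g t)) • ((List.finRange (q + 1)).map fun t => B (g t)).prod)]
      rw [Fintype.sum_prod_type]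
      rw [Finset.sum_comm]
      refine Finset.sum_congr rfl fun g _ => ?_
      rw [Finset.sum_mul]
      refine Finset.sum_congr rfl fun i _ => ?_
      have hc : (Fin.consEquiv fun _ : Fin (q + 1) => ι) (i, g)
          = (Fin.cons i g : Fin (q + 1) → ι) := rfl
      rw [hc]
      have h1 : (∏ t, w ((Fin.cons i g : Fin (q + 1) → ι) t)) = w i * ∏ t, w (g t) := by
        rw [Fin.prod_univ_succ]
        simp
      have h2 : ((List.finRange (q + 1)).map fun t => B ((Fin.cons i g : Fin (q + 1) → ι) t))
          = B i :: ((List.finRange q).map fun t => B (g t)) := by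
        rw [List.finRange_succ, List.map_cons, List.map_map]
        simp [Function.comp_def]
      rw [h1, h2, List.prod_cons, smul_mul_smul_comm]

lemma sum_pi_bool : ∀ (k : ℕ) (F : Fin k → Bool → ℝ),
    ∑ b : Fin k → Bool, ∏ i, F i (b i) = ∏ i, (F i false + F i true)
  | 0, F => by
      haveI : Unique (Fin 0 → Bool) := ⟨⟨Fin.elim0⟩, fun f => funext fun t => t.elim0⟩
      rw [Fintype.sum_unique (fun b : Fin 0 → Bool => ∏ i, F i (b i))]
      simp
  | (k + 1), F => by
      rw [← Equiv.sum_comp (Fin.consEquiv fun _ : Fin (k + 1) => Bool)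
        (fun b : Fin (k + 1) → Bool => ∏ i, F i (b i))]
      rw [Fintype.sum_prod_type]
      have h1 : ∀ (i : Bool) (b : Fin k → Bool),
          (∏ t, F t ((Fin.consEquiv fun _ : Fin (k + 1) => Bool) (i, b) t))
            = F 0 i * ∏ t : Fin k, F t.succ (b t) := by
        intro i b
        have hc : (Fin.consEquiv fun _ : Fin (k + 1) => Bool) (i, b)
            = (Fin.cons i b : Fin (k + 1) → Bool) := rfl
        rw [hc, Fin.prod_univ_succ]
        simp
      simp_rw [h1]
      rw [Fin.prod_univ_succ]
      have h2 := sum_pi_bool k (fun t => F t.succ)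
      calc ∑ i : Bool, ∑ b : Fin k → Bool, F 0 i * ∏ t : Fin k, F t.succ (b t)
          = ∑ i : Bool, F 0 i * ∑ b : Fin k → Bool, ∏ t : Fin k, F t.succ (b t) := by
            simp_rw [Finset.mul_sum]
        _ = (F 0 false + F 0 true) * ∏ t : Fin k, (F t.succ false + F t.succ true) := by
            rw [h2, Fintype.sum_bool]; ring

lemma pmo_pow_sum (m : ℕ) :
    pmo false ^ m + pmo true ^ m = if Even m then 2 else 0 := by
  have hf : pmo false = -1 := rfl
  have ht : pmo true = 1 := rfl
  rw [hf, ht, one_pow]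
  by_cases h : Even m
  · rw [if_pos h, h.neg_one_pow]; norm_num
  · rw [if_neg h, (Nat.not_even_iff_odd.1 h).neg_one_pow]; norm_num





variable {k q : ℕ}

/-- number of occurrences of `i` among the coordinates of the values of `g`. -/
def mlt (g : Fin q → Fin k × Fin k) (i : Fin k) : ℕ :=
  (univ.filter fun t => (g t).1 = i).card + (univ.filter fun t => (g t).2 = i).card

lemma coeff_sum (g : Fin q → Fin k × Fin k) :
    ∑ b : Fin k → Bool, ∏ t, (pmo (b (g t).1) * pmo (b (g t).2))
      = if (∀ i, Even (mlt g i)) then (2 : ℝ) ^ k else 0 := by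
  have key : ∀ b : Fin k → Bool,
      (∏ t, (pmo (b (g t).1) * pmo (b (g t).2))) = ∏ i, pmo (b i) ^ mlt g i := by
    intro b
    rw [Finset.prod_mul_distrib]
    have e1 : (∏ t, pmo (b (g t).1))
        = ∏ i, pmo (b i) ^ (univ.filter fun t => (g t).1 = i).card := by
      rw [← Finset.prod_fiberwise_of_maps_to (g := fun t => (g t).1)
        (fun t _ => Finset.mem_univ _) (fun t => pmo (b (g t).1))]
      refine Finset.prod_congr rfl fun i _ => ?_
      rw [Finset.prod_congr rfl (fun t ht => ?_), Finset.prod_const]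
      rw [Finset.mem_filter] at ht
      rw [ht.2]
    have e2 : (∏ t, pmo (b (g t).2))
        = ∏ i, pmo (b i) ^ (univ.filter fun t => (g t).2 = i).card := by
      rw [← Finset.prod_fiberwise_of_maps_to (g := fun t => (g t).2)
        (fun t _ => Finset.mem_univ _) (fun t => pmo (b (g t).2))]
      refine Finset.prod_congr rfl fun i _ => ?_
      rw [Finset.prod_congr rfl (fun t ht => ?_), Finset.prod_const]
      rw [Finset.mem_filter] at ht
      rw [ht.2]
    rw [e1, e2, ← Finset.prod_mul_distrib]
    refine Finset.prod_congr rfl fun i _ => ?_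
    rw [← pow_add]
    rfl
  simp_rw [key]
  rw [sum_pi_bool k (fun i β => pmo β ^ mlt g i)]
  have : ∀ i : Fin k, pmo false ^ mlt g i + pmo true ^ mlt g i
      = if Even (mlt g i) then (2:ℝ) else 0 := fun i => pmo_pow_sum (mlt g i)
  simp_rw [this]
  by_cases hall : ∀ i, Even (mlt g i)
  · rw [if_pos hall, Finset.prod_congr rfl (fun i _ => if_pos (hall i)),
      Finset.prod_const, Finset.card_univ, Fintype.card_fin]
  · rw [if_neg hall]
    push_neg at hall
    obtain ⟨i, hi⟩ := hall
    exact Finset.prod_eq_zero (Finset.mem_univ i) (if_neg hi)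

lemma mlt_sum (g : Fin q → Fin k × Fin k) : ∑ i, mlt g i = 2 * q := by
  unfold mlt
  rw [Finset.sum_add_distrib]
  have h1 : ∑ i, (univ.filter fun t => (g t).1 = i).card = q := by
    rw [← Finset.card_eq_sum_card_fiberwise (f := fun t => (g t).1)
      (fun t _ => Finset.mem_univ _)]
    simp
  have h2 : ∑ i, (univ.filter fun t => (g t).2 = i).card = q := by
    rw [← Finset.card_eq_sum_card_fiberwise (f := fun t => (g t).2)
      (fun t _ => Finset.mem_univ _)]
    simp
  rw [h1, h2, two_mul]

lemma pow_self_le (q : ℕ) : (q : ℝ) ^ q ≤ 3 ^ q * (q.factorial : ℝ) := by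
  induction q with
  | zero => norm_num
  | succ m ih =>
    rcases Nat.eq_zero_or_pos m with rfl | hm
    · norm_num
    have hm' : (0:ℝ) < m := by exact_mod_cast hm
    have hstep : ((m:ℝ) + 1) ^ m ≤ Real.exp 1 * (m:ℝ) ^ m := by
      have he : 1 + 1/(m:ℝ) ≤ Real.exp (1/m) := by
        have := Real.add_one_le_exp (1/(m:ℝ)); linarith
      have h0 : (m:ℝ) + 1 ≤ m * Real.exp (1/m) := by
        have h0' := mul_le_mul_of_nonneg_left he hm'.le
        calc (m:ℝ) + 1 = m * (1 + 1/m) := by field_simp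
          _ ≤ m * Real.exp (1/m) := h0'
      calc ((m:ℝ)+1)^m ≤ ((m:ℝ) * Real.exp (1/m))^m := pow_le_pow_left₀ (by positivity) h0 m
        _ = (m:ℝ)^m * Real.exp (1/m)^m := mul_pow _ _ _
        _ = (m:ℝ)^m * Real.exp 1 := by
            rw [← Real.exp_nat_mul]
            congr 1
            field_simp
        _ = Real.exp 1 * (m:ℝ)^m := mul_comm _ _
    have hexp3 : Real.exp 1 ≤ 3 := by linarith [Real.exp_one_lt_d9]
    have hfac : ((m+1).factorial : ℝ) = ((m:ℝ)+1) * (m.factorial : ℝ) := by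
      rw [Nat.factorial_succ]; push_cast; ring
    have hpos : (0:ℝ) ≤ (m:ℝ)+1 := by positivity
    calc ((m+1 : ℕ) : ℝ) ^ (m+1) = ((m:ℝ)+1)^m * ((m:ℝ)+1) := by push_cast; rw [pow_succ]
      _ ≤ (Real.exp 1 * (m:ℝ)^m) * ((m:ℝ)+1) := mul_le_mul_of_nonneg_right hstep hpos
      _ ≤ (3 * (3^m * (m.factorial:ℝ))) * ((m:ℝ)+1) := by
          have h2 : Real.exp 1 * (m:ℝ)^m ≤ 3 * (3^m * (m.factorial:ℝ)) := by
            calc Real.exp 1 * (m:ℝ)^m ≤ 3 * (m:ℝ)^m :=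
                  mul_le_mul_of_nonneg_right hexp3 (by positivity)
              _ ≤ 3 * (3^m * (m.factorial:ℝ)) := mul_le_mul_of_nonneg_left ih (by norm_num)
          exact mul_le_mul_of_nonneg_right h2 hpos
      _ = 3^(m+1) * ((m+1).factorial : ℝ) := by rw [hfac, pow_succ]; ring

lemma count_even (hq : 0 < q) :
    (((univ : Finset (Fin q → Fin k × Fin k)).filter fun g => ∀ i, Even (mlt g i)).card : ℝ)
      ≤ (3 * q * k : ℝ) ^ q := by
  set qk := min q k with hqk
  have hsub : ((univ : Finset (Fin q → Fin k × Fin k)).filter fun g => ∀ i, Even (mlt g i)) ⊆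
      (Finset.powersetCard qk (univ : Finset (Fin k))).biUnion
        (fun S => univ.filter fun g : Fin q → Fin k × Fin k =>
          ∀ t, (g t).1 ∈ S ∧ (g t).2 ∈ S) := by
    intro g hg
    rw [Finset.mem_filter] at hg
    have hg2 := hg.2
    set Sg := ((univ : Finset (Fin q)).image fun t => (g t).1)
        ∪ ((univ : Finset (Fin q)).image fun t => (g t).2) with hSg
    have hmlt_pos : ∀ i ∈ Sg, 2 ≤ mlt g i := by
      intro i hi
      have h1 : 1 ≤ mlt g i := by
        rw [hSg, Finset.mem_union] at hi
        rcases hi with hi | hi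
        · rw [Finset.mem_image] at hi
          obtain ⟨t, _, ht⟩ := hi
          have : t ∈ univ.filter fun t => (g t).1 = i := by
            simp [ht]
          have := Finset.card_pos.2 ⟨t, this⟩
          unfold mlt; omega
        · rw [Finset.mem_image] at hi
          obtain ⟨t, _, ht⟩ := hi
          have : t ∈ univ.filter fun t => (g t).2 = i := by
            simp [ht]
          have := Finset.card_pos.2 ⟨t, this⟩
          unfold mlt; omega
      have h2 := hg2 i
      rcases h2 with ⟨c, hc⟩
      omega
    have hSgcard : Sg.card ≤ qk := by
      have hs : 2 * Sg.card ≤ ∑ i ∈ Sg, mlt g i := by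
        calc 2 * Sg.card = ∑ _i ∈ Sg, 2 := by rw [Finset.sum_const]; ring
          _ ≤ ∑ i ∈ Sg, mlt g i := Finset.sum_le_sum hmlt_pos
      have hs2 : ∑ i ∈ Sg, mlt g i ≤ ∑ i, mlt g i :=
        Finset.sum_le_sum_of_subset (Finset.subset_univ Sg)
      rw [mlt_sum] at hs2
      have hq' : Sg.card ≤ q := by omega
      have hk' : Sg.card ≤ k := by
        have := Finset.card_le_univ Sg
        simpa using this
      exact le_min hq' hk'
    have hqk_le : qk ≤ (univ : Finset (Fin k)).card := by
      rw [Finset.card_univ, Fintype.card_fin]; exact min_le_right q k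
    obtain ⟨S, hS1, hS2, hS3⟩ := Finset.exists_subsuperset_card_eq (Finset.subset_univ Sg)
      hSgcard hqk_le
    refine Finset.mem_biUnion.2 ⟨S, ?_, ?_⟩
    · rw [Finset.mem_powersetCard]
      exact ⟨Finset.subset_univ S, hS3⟩
    · rw [Finset.mem_filter]
      refine ⟨Finset.mem_univ _, fun t => ⟨?_, ?_⟩⟩
      · exact hS1 (Finset.mem_union_left _ (Finset.mem_image_of_mem _ (Finset.mem_univ t)))
      · exact hS1 (Finset.mem_union_right _ (Finset.mem_image_of_mem _ (Finset.mem_univ t)))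
  have hcount : ∀ S : Finset (Fin k),
      (univ.filter fun g : Fin q → Fin k × Fin k =>
        ∀ t, (g t).1 ∈ S ∧ (g t).2 ∈ S).card = (S.card * S.card) ^ q := by
    intro S
    have : (univ.filter fun g : Fin q → Fin k × Fin k =>
        ∀ t, (g t).1 ∈ S ∧ (g t).2 ∈ S) = Fintype.piFinset (fun _ : Fin q => S ×ˢ S) := by
      ext g
      simp [Fintype.mem_piFinset, Finset.mem_product]
    rw [this, Fintype.card_piFinset]
    simp [Finset.card_product]
  have hnat : (((univ : Finset (Fin q → Fin k × Fin k)).filter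
      fun g => ∀ i, Even (mlt g i)).card : ℕ)
      ≤ k.choose qk * (qk * qk) ^ q := by
    calc (((univ : Finset (Fin q → Fin k × Fin k)).filter
        fun g => ∀ i, Even (mlt g i)).card : ℕ)
        ≤ ((Finset.powersetCard qk (univ : Finset (Fin k))).biUnion
          (fun S => univ.filter fun g : Fin q → Fin k × Fin k =>
            ∀ t, (g t).1 ∈ S ∧ (g t).2 ∈ S)).card := Finset.card_le_card hsub
      _ ≤ ∑ S ∈ Finset.powersetCard qk (univ : Finset (Fin k)),
          (univ.filter fun g : Fin q → Fin k × Fin k =>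
            ∀ t, (g t).1 ∈ S ∧ (g t).2 ∈ S).card := Finset.card_biUnion_le
      _ = ∑ S ∈ Finset.powersetCard qk (univ : Finset (Fin k)), (qk * qk) ^ q := by
          refine Finset.sum_congr rfl fun S hS => ?_
          rw [Finset.mem_powersetCard] at hS
          rw [hcount S, hS.2]
      _ = k.choose qk * (qk * qk) ^ q := by
          rw [Finset.sum_const, Finset.card_powersetCard, Finset.card_univ, Fintype.card_fin,
            smul_eq_mul]
  have hreal : (((univ : Finset (Fin q → Fin k × Fin k)).filter
      fun g => ∀ i, Even (mlt g i)).card : ℝ)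
      ≤ (k.choose qk : ℝ) * ((qk : ℝ) * qk) ^ q := by
    calc (((univ : Finset (Fin q → Fin k × Fin k)).filter
        fun g => ∀ i, Even (mlt g i)).card : ℝ)
        ≤ ((k.choose qk * (qk * qk) ^ q : ℕ) : ℝ) := by exact_mod_cast hnat
      _ = (k.choose qk : ℝ) * ((qk : ℝ) * qk) ^ q := by push_cast; ring
  refine hreal.trans ?_
  rcases le_or_gt q k with h | h
  · have hqk' : qk = q := min_eq_left h
    rw [hqk']
    have hc : (k.choose q : ℝ) ≤ (k : ℝ) ^ q / (q.factorial : ℝ) := Nat.choose_le_pow_div q k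
    have hfac : (0:ℝ) < (q.factorial : ℝ) := by positivity
    calc (k.choose q : ℝ) * ((q:ℝ) * q) ^ q
        ≤ ((k : ℝ) ^ q / (q.factorial : ℝ)) * ((q:ℝ) ^ q * (q:ℝ) ^ q) := by
          rw [mul_pow]
          exact mul_le_mul_of_nonneg_right hc (by positivity)
      _ ≤ ((k : ℝ) ^ q / (q.factorial : ℝ)) * ((q:ℝ) ^ q * (3 ^ q * (q.factorial : ℝ))) := by
          refine mul_le_mul_of_nonneg_left ?_ (by positivity)
          exact mul_le_mul_of_nonneg_left (pow_self_le q) (by positivity)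
      _ = (3 * q * k : ℝ) ^ q := by
          field_simp
          rw [show (3 * (q:ℝ) * k) = (3 * q) * k by ring, mul_pow, mul_pow]
          ring
  · have hqk' : qk = k := min_eq_right h.le
    rw [hqk', Nat.choose_self]
    push_cast
    rw [one_mul]
    refine pow_le_pow_left₀ (by positivity) ?_ q
    have : (k:ℝ) ≤ q := by exact_mod_cast h.le
    nlinarith [show (0:ℝ) ≤ k by positivity, show (0:ℝ) ≤ q by positivity]



variable {α β : Type*} [Fintype α] [Fintype β]

lemma dot_self_nonneg (v : β → ℝ) : 0 ≤ v ⬝ᵥ v := by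
  unfold dotProduct
  exact Finset.sum_nonneg fun i _ => mul_self_nonneg _

lemma cauchy_dot (v w : β → ℝ) : (v ⬝ᵥ w) ^ 2 ≤ (v ⬝ᵥ v) * (w ⬝ᵥ w) := by
  unfold dotProduct
  have := Finset.sum_mul_sq_le_sq_mul_sq (univ : Finset β) v w
  calc (∑ i, v i * w i) ^ 2 ≤ (∑ i, v i ^ 2) * ∑ i, w i ^ 2 := this
    _ = (∑ i, v i * v i) * ∑ i, w i * w i := by simp_rw [sq]

lemma dot_transpose_mul (C : Matrix α β ℝ) (Y : β → ℝ) :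
    Y ⬝ᵥ (Cᵀ * C) *ᵥ Y = (C *ᵥ Y) ⬝ᵥ (C *ᵥ Y) := by
  rw [← Matrix.mulVec_mulVec, dotProduct_mulVec, Matrix.vecMul_transpose]

section Powers

variable (C : Matrix α β ℝ) (Y : β → ℝ)

/-- the Gram matrix. -/
def Gm : Matrix β β ℝ := Cᵀ * C

lemma Gm_sym : (Gm C)ᵀ = Gm C := by
  unfold Gm
  rw [Matrix.transpose_mul, Matrix.transpose_transpose]

lemma Gm_pow_sym (j : ℕ) : ((Gm C) ^ j)ᵀ = (Gm C) ^ j := by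
  rw [Matrix.transpose_pow, Gm_sym]

/-- the moment sequence. -/
def cm (j : ℕ) : ℝ := Y ⬝ᵥ ((Gm C) ^ j) *ᵥ Y

lemma cm_zero : cm C Y 0 = Y ⬝ᵥ Y := by
  unfold cm
  rw [pow_zero, Matrix.one_mulVec]

lemma cm_even_eq (m : ℕ) :
    cm C Y (2 * m) = ((Gm C ^ m) *ᵥ Y) ⬝ᵥ ((Gm C ^ m) *ᵥ Y) := by
  have h := dot_transpose_mul ((Gm C) ^ m) Y
  rw [Gm_pow_sym] at h
  unfold cm
  rw [two_mul, pow_add]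
  exact h

lemma cm_even_nonneg (m : ℕ) : 0 ≤ cm C Y (2 * m) := by
  rw [cm_even_eq]; exact dot_self_nonneg _

lemma cm_one_eq : cm C Y 1 = (C *ᵥ Y) ⬝ᵥ (C *ᵥ Y) := by
  unfold cm
  rw [pow_one]
  exact dot_transpose_mul _ _

lemma cm_one_nonneg : 0 ≤ cm C Y 1 := by
  rw [cm_one_eq]; exact dot_self_nonneg _

lemma cm_sq_le (j : ℕ) : (cm C Y j) ^ 2 ≤ cm C Y 0 * cm C Y (2 * j) := by
  rw [cm_zero, cm_even_eq]
  have h1 : cm C Y j = Y ⬝ᵥ ((Gm C) ^ j) *ᵥ Y := rfl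
  rw [h1]
  have h2 : Y ⬝ᵥ ((Gm C) ^ j) *ᵥ Y = Y ⬝ᵥ ((Gm C ^ j) *ᵥ Y) := rfl
  rw [h2]
  exact cauchy_dot Y _

lemma cm_doubling : ∀ s : ℕ,
    (cm C Y 1) ^ (2 ^ s) ≤ (cm C Y 0) ^ (2 ^ s - 1) * cm C Y (2 ^ s)
  | 0 => by simp
  | (s + 1) => by
      have ih := cm_doubling s
      have h1 : (1:ℕ) ≤ 2 ^ s := Nat.one_le_two_pow
      have hc0 : 0 ≤ cm C Y 0 := by rw [cm_zero]; exact dot_self_nonneg _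
      have hc1 : 0 ≤ cm C Y 1 := cm_one_nonneg C Y
      calc (cm C Y 1) ^ (2 ^ (s+1)) = ((cm C Y 1) ^ (2 ^ s)) ^ 2 := by
            rw [← pow_mul, pow_succ]
        _ ≤ ((cm C Y 0) ^ (2 ^ s - 1) * cm C Y (2 ^ s)) ^ 2 :=
            pow_le_pow_left₀ (pow_nonneg hc1 _) ih 2
        _ = (cm C Y 0) ^ (2 * (2 ^ s - 1)) * (cm C Y (2 ^ s)) ^ 2 := by
            rw [mul_pow, ← pow_mul, mul_comm (2 ^ s - 1) 2]
        _ ≤ (cm C Y 0) ^ (2 * (2 ^ s - 1)) * (cm C Y 0 * cm C Y (2 * 2 ^ s)) :=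
            mul_le_mul_of_nonneg_left (cm_sq_le C Y _) (pow_nonneg hc0 _)
        _ = (cm C Y 0) ^ (2 ^ (s+1) - 1) * cm C Y (2 ^ (s+1)) := by
            have h2 : 2 ^ (s+1) = 2 * 2 ^ s := by rw [pow_succ]; ring
            have h3 : 2 * (2 ^ s - 1) + 1 = 2 ^ (s+1) - 1 := by omega
            rw [← h2, ← h3, pow_succ']
            ring

lemma cm_frob (m : ℕ) :
    cm C Y (2 * m) ≤ cm C Y 0 * ((Gm C) ^ (2 * m)).trace := by
  set N := Gm C with hN
  have hw : cm C Y (2 * m) = ∑ p, ((N ^ m) *ᵥ Y) p * ((N ^ m) *ᵥ Y) p := by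
    rw [cm_even_eq]; rfl
  have htr : ((N) ^ (2 * m)).trace = ∑ p, ∑ p', ((N ^ m) p p') ^ 2 := by
    have h1 : (N : Matrix β β ℝ) ^ (2 * m) = N ^ m * N ^ m := by
      rw [two_mul, pow_add]
    rw [h1]
    unfold Matrix.trace
    refine Finset.sum_congr rfl fun p _ => ?_
    rw [Matrix.diag_apply, Matrix.mul_apply]
    refine Finset.sum_congr rfl fun p' _ => ?_
    have hsymm : (N ^ m) p' p = (N ^ m) p p' := by
      conv_lhs => rw [← Gm_pow_sym C m, Matrix.transpose_apply]
    rw [hsymm]; ring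
  rw [hw, htr]
  have hY2 : cm C Y 0 = ∑ p', Y p' ^ 2 := by
    rw [cm_zero]; unfold dotProduct; simp_rw [sq]
  have hbound : ∀ p, ((N ^ m) *ᵥ Y) p * ((N ^ m) *ᵥ Y) p
      ≤ (∑ p', ((N ^ m) p p') ^ 2) * cm C Y 0 := by
    intro p
    have h1 : ((N ^ m) *ᵥ Y) p = ∑ p', (N ^ m) p p' * Y p' := rfl
    rw [h1, ← sq, hY2]
    exact Finset.sum_mul_sq_le_sq_mul_sq univ _ _
  calc ∑ p, ((N ^ m) *ᵥ Y) p * ((N ^ m) *ᵥ Y) p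
      ≤ ∑ p, (∑ p', ((N ^ m) p p') ^ 2) * cm C Y 0 := Finset.sum_le_sum fun p _ => hbound p
    _ = cm C Y 0 * ∑ p, ∑ p', ((N ^ m) p p') ^ 2 := by rw [← Finset.sum_mul]; ring

lemma trace_pow_nonneg (m : ℕ) : 0 ≤ ((Gm C) ^ (2 * m)).trace := by
  have h1 : (Gm C) ^ (2 * m) = (Gm C) ^ m * (Gm C) ^ m := by rw [two_mul, pow_add]
  rw [h1]
  unfold Matrix.trace
  refine Finset.sum_nonneg fun p _ => ?_
  rw [Matrix.diag_apply, Matrix.mul_apply]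
  refine Finset.sum_nonneg fun p' _ => ?_
  have hsymm : (Gm C ^ m) p' p = (Gm C ^ m) p p' := by
    conv_lhs => rw [← Gm_pow_sym C m, Matrix.transpose_apply]
  rw [hsymm]
  exact mul_self_nonneg _

/-- the key analytic bound: the `2q`-th power of the bilinear form evaluated at sign
vectors is controlled by the trace of the `q`-th power of the Gram matrix, `q = 2^s`. -/
lemma main_bound (X : α → ℝ) (hX2 : ∀ a, X a ^ 2 = 1) (hY2 : ∀ p, Y p ^ 2 = 1)
    (s : ℕ) (hs : 1 ≤ s) :
    (X ⬝ᵥ C *ᵥ Y) ^ (2 * 2 ^ s) ≤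
      (Fintype.card α : ℝ) ^ (2 ^ s) * (Fintype.card β : ℝ) ^ (2 ^ s)
        * ((Gm C) ^ (2 ^ s)).trace := by
  set q := 2 ^ s with hq
  have hXX : X ⬝ᵥ X = (Fintype.card α : ℝ) := by
    unfold dotProduct
    rw [Finset.sum_congr rfl fun a _ => by rw [← sq, hX2 a]]
    simp
  have hYY : cm C Y 0 = (Fintype.card β : ℝ) := by
    rw [cm_zero]
    unfold dotProduct
    rw [Finset.sum_congr rfl fun p _ => by rw [← sq, hY2 p]]
    simp
  have hq1 : 1 ≤ q := Nat.one_le_two_pow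
  have hqeq : q = 2 * 2 ^ (s - 1) := by
    rw [hq, ← pow_succ']
    congr 1
    omega
  have hF2 : (X ⬝ᵥ C *ᵥ Y) ^ 2 ≤ (Fintype.card α : ℝ) * cm C Y 1 := by
    rw [← hXX, cm_one_eq]
    exact cauchy_dot X _
  have hcard_nonneg : (0:ℝ) ≤ (Fintype.card α : ℝ) := by positivity
  have htr0 : 0 ≤ ((Gm C) ^ q).trace := by
    rw [hqeq]; exact trace_pow_nonneg C _
  have hc1q : (cm C Y 1) ^ q ≤ (Fintype.card β : ℝ) ^ q * ((Gm C) ^ q).trace := by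
    calc (cm C Y 1) ^ q ≤ (cm C Y 0) ^ (q - 1) * cm C Y q := by
          rw [hq]; exact cm_doubling C Y s
      _ ≤ (cm C Y 0) ^ (q - 1) * (cm C Y 0 * ((Gm C) ^ q).trace) := by
          refine mul_le_mul_of_nonneg_left ?_ (by rw [hYY]; positivity)
          conv_lhs => rw [hqeq]
          conv_rhs => rw [hqeq]
          exact cm_frob C Y _
      _ = (cm C Y 0) ^ q * ((Gm C) ^ q).trace := by
          rw [← mul_assoc, ← pow_succ]
          congr 2
          omega
      _ = (Fintype.card β : ℝ) ^ q * ((Gm C) ^ q).trace := by rw [hYY]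
  calc (X ⬝ᵥ C *ᵥ Y) ^ (2 * q) = ((X ⬝ᵥ C *ᵥ Y) ^ 2) ^ q := by rw [← pow_mul]
    _ ≤ ((Fintype.card α : ℝ) * cm C Y 1) ^ q := pow_le_pow_left₀ (sq_nonneg _) hF2 q
    _ = (Fintype.card α : ℝ) ^ q * (cm C Y 1) ^ q := mul_pow _ _ _
    _ ≤ (Fintype.card α : ℝ) ^ q * ((Fintype.card β : ℝ) ^ q * ((Gm C) ^ q).trace) :=
        mul_le_mul_of_nonneg_left hc1q (by positivity)
    _ = (Fintype.card α : ℝ) ^ q * (Fintype.card β : ℝ) ^ q * ((Gm C) ^ q).trace := by ring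

end Powers


section MainLemmas

variable {n' k' : ℕ} {P : Type} [Fintype P]

lemma Nice.transpose {α β : Type*} [Fintype α] [Fintype β] {M : Matrix α β ℝ}
    (h : Nice M) : Nice Mᵀ :=
  ⟨fun b a => h.1 a b, h.2.2, h.2.1⟩

lemma term_trace_le (A : Fin k' → Matrix (Fin n') P ℝ) (hA : ∀ i, Nice (A i)) :
    ∀ q : ℕ, 1 ≤ q → ∀ g : Fin q → Fin k' × Fin k',
      (((List.finRange q).map fun t => (A (g t).1)ᵀ * A (g t).2).prod).trace ≤ (n' : ℝ)
  | 0, h => by omega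
  | (q' + 1), _ => by
      intro g
      have hrest : Nice (((List.finRange q').map
          fun t => (A (g t.succ).1)ᵀ * A (g t.succ).2).prod) := by
        refine Nice.listProd _ fun M hM => ?_
        rw [List.mem_map] at hM
        obtain ⟨t, _, rfl⟩ := hM
        exact ((hA _).transpose).mul (hA _)
      have hsplit : ((List.finRange (q' + 1)).map fun t => (A (g t).1)ᵀ * A (g t).2)
          = ((A (g 0).1)ᵀ * A (g 0).2) :: ((List.finRange q').map
              fun t => (A (g t.succ).1)ᵀ * A (g t.succ).2) := by
        rw [List.finRange_succ, List.map_cons, List.map_map]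
        simp [Function.comp_def]
      rw [hsplit, List.prod_cons, Matrix.mul_assoc]
      have := trace_transpose_mul_le (hA (g 0).1) ((hA (g 0).2).mul hrest)
      simpa using this

lemma sum_trace_le (A : Fin k' → Matrix (Fin n') P ℝ) (hA : ∀ i, Nice (A i))
    (q : ℕ) (hq : 1 ≤ q) :
    ∑ b : Fin k' → Bool, ((Gm (∑ i, pmo (b i) • A i)) ^ q).trace
      ≤ 2 ^ k' * (n' : ℝ) * ((3 : ℝ) * q * k') ^ q := by
  have hGram : ∀ b : Fin k' → Bool,
      Gm (∑ i, pmo (b i) • A i) = ∑ ij : Fin k' × Fin k',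
        (pmo (b ij.1) * pmo (b ij.2)) • ((A ij.1)ᵀ * A ij.2) := by
    intro b
    unfold Gm
    rw [Fintype.sum_prod_type, Matrix.transpose_sum]
    simp_rw [Matrix.transpose_smul]
    rw [Matrix.sum_mul]
    refine Finset.sum_congr rfl fun i _ => ?_
    rw [Matrix.mul_sum]
    refine Finset.sum_congr rfl fun j _ => ?_
    rw [Matrix.smul_mul, Matrix.mul_smul, smul_smul]
  have hexp : ∀ b : Fin k' → Bool, ((Gm (∑ i, pmo (b i) • A i)) ^ q).trace
      = ∑ g : Fin q → Fin k' × Fin k',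
          (∏ t, pmo (b (g t).1) * pmo (b (g t).2)) *
            ((((List.finRange q).map fun t => (A (g t).1)ᵀ * A (g t).2)).prod).trace := by
    intro b
    rw [hGram b]
    rw [expand (fun ij : Fin k' × Fin k' => pmo (b ij.1) * pmo (b ij.2))
      (fun ij : Fin k' × Fin k' => (A ij.1)ᵀ * A ij.2) q]
    rw [Matrix.trace_sum]
    refine Finset.sum_congr rfl fun g _ => ?_
    rw [Matrix.trace_smul]
    rw [smul_eq_mul]
  calc ∑ b : Fin k' → Bool, ((Gm (∑ i, pmo (b i) • A i)) ^ q).trace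
      = ∑ g : Fin q → Fin k' × Fin k',
          (∑ b : Fin k' → Bool, ∏ t, pmo (b (g t).1) * pmo (b (g t).2)) *
            ((((List.finRange q).map fun t => (A (g t).1)ᵀ * A (g t).2)).prod).trace := by
        rw [Finset.sum_congr rfl fun b _ => hexp b, Finset.sum_comm]
        exact Finset.sum_congr rfl fun g _ => by rw [← Finset.sum_mul]
    _ = ∑ g : Fin q → Fin k' × Fin k',
          (if (∀ i, Even (mlt g i)) then (2:ℝ) ^ k' else 0) *
            ((((List.finRange q).map fun t => (A (g t).1)ᵀ * A (g t).2)).prod).trace := by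
        exact Finset.sum_congr rfl fun g _ => by rw [coeff_sum g]
    _ ≤ ∑ g : Fin q → Fin k' × Fin k',
          (if (∀ i, Even (mlt g i)) then (2:ℝ) ^ k' * n' else 0) := by
        refine Finset.sum_le_sum fun g _ => ?_
        by_cases h : ∀ i, Even (mlt g i)
        · rw [if_pos h, if_pos h]
          exact mul_le_mul_of_nonneg_left (term_trace_le A hA q hq g) (by positivity)
        · rw [if_neg h, if_neg h, zero_mul]
    _ = (((univ : Finset (Fin q → Fin k' × Fin k')).filter
          fun g => ∀ i, Even (mlt g i)).card : ℝ) * ((2:ℝ) ^ k' * n') := by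
        rw [← Finset.sum_filter, Finset.sum_const, nsmul_eq_mul]
    _ ≤ ((3:ℝ) * q * k') ^ q * ((2:ℝ) ^ k' * n') := by
        refine mul_le_mul_of_nonneg_right (count_even (by omega)) (by positivity)
    _ = 2 ^ k' * (n' : ℝ) * ((3:ℝ) * q * k') ^ q := by ring

lemma dot_eq (G : Fin k' → Finset (Fin n' × P)) (A : Fin k' → Matrix (Fin n') P ℝ)
    (hA : ∀ i v p, A i v p = if (v, p) ∈ G i then (1:ℝ) else 0)
    (b : Fin k' → Bool) (x : Fin n' → Bool) (y : P → Bool) :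
    (∑ i, pmo (b i) * ∑ e ∈ G i, pmo (x e.1) * pmo (y e.2))
      = (fun v => pmo (x v)) ⬝ᵥ (∑ i, pmo (b i) • A i) *ᵥ (fun p => pmo (y p)) := by
  have hMb_apply : ∀ v p, (∑ i, pmo (b i) • A i) v p
      = ∑ i, pmo (b i) * (if (v, p) ∈ G i then (1:ℝ) else 0) := by
    intro v p
    rw [Matrix.sum_apply]
    exact Finset.sum_congr rfl fun i _ => by rw [Matrix.smul_apply, smul_eq_mul, hA]
  have hmulvec : ∀ v, ((∑ i, pmo (b i) • A i) *ᵥ (fun p => pmo (y p))) v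
      = ∑ p, (∑ i, pmo (b i) * (if (v, p) ∈ G i then (1:ℝ) else 0)) * pmo (y p) := by
    intro v
    simp only [Matrix.mulVec, dotProduct]
    exact Finset.sum_congr rfl fun p _ => by beta_reduce; rw [hMb_apply]
  have hRHS : (fun v => pmo (x v)) ⬝ᵥ (∑ i, pmo (b i) • A i) *ᵥ (fun p => pmo (y p))
      = ∑ v, ∑ p, ∑ i, pmo (x v) *
          (pmo (b i) * (if (v, p) ∈ G i then (1:ℝ) else 0) * pmo (y p)) := by
    simp only [dotProduct]
    refine Finset.sum_congr rfl fun v _ => ?_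
    rw [hmulvec v, Finset.mul_sum]
    refine Finset.sum_congr rfl fun p _ => ?_
    rw [Finset.sum_mul, Finset.mul_sum]
  have hLHS : (∑ i, pmo (b i) * ∑ e ∈ G i, pmo (x e.1) * pmo (y e.2))
      = ∑ e : Fin n' × P, ∑ i, pmo (x e.1) *
          (pmo (b i) * (if e ∈ G i then (1:ℝ) else 0) * pmo (y e.2)) := by
    have h1 : ∀ i, pmo (b i) * (∑ e ∈ G i, pmo (x e.1) * pmo (y e.2))
        = ∑ e : Fin n' × P, pmo (x e.1) *
            (pmo (b i) * (if e ∈ G i then (1:ℝ) else 0) * pmo (y e.2)) := by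
      intro i
      have h2 : ∀ e : Fin n' × P, pmo (x e.1) *
          (pmo (b i) * (if e ∈ G i then (1:ℝ) else 0) * pmo (y e.2))
          = if e ∈ G i then pmo (b i) * (pmo (x e.1) * pmo (y e.2)) else 0 := by
        intro e; split_ifs <;> ring
      rw [Finset.sum_congr rfl fun e _ => h2 e, Finset.sum_ite_mem, Finset.univ_inter,
        ← Finset.mul_sum]
    rw [Finset.sum_congr rfl fun i _ => h1 i, Finset.sum_comm]
  rw [hLHS, hRHS, Fintype.sum_prod_type]

end MainLemmas

end TwoXorAux

open TwoXorAux Matrix in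
/-- **2-XOR refutation.** -/
theorem two_xor_refutation :
    ∃ c : ℝ, 0 < c ∧
      ∀ (n k d : ℕ), 2 ≤ n → 0 < k → 0 < d →
      ∀ (P : Type) (_ : Fintype P)
        (G : Fin k → Finset (Fin n × P)),
        ((Fintype.card P : ℝ) ≤ n * k / d) →
        (∀ i, Set.Pairwise (G i : Set (Fin n × P))
          (fun e e' => e.1 ≠ e'.1 ∧ e.2 ≠ e'.2)) →
        (∑ b : Fin k → Bool,
            ⨆ x : Fin n → Bool, ⨆ y : P → Bool,
              ∑ i, pmo (b i) * ∑ e ∈ G i, pmo (x e.1) * pmo (y e.2)) / 2 ^ k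
          ≤ c * n * k * Real.sqrt (Real.log n / d) := by
  refine ⟨10, by norm_num, ?_⟩
  intro n k d hn hk hd P instP G hcard hmatch
  -- basic facts
  have hn1 : (1:ℝ) < n := by exact_mod_cast hn
  have hn0 : (0:ℝ) < n := by linarith
  have hL : 0 < Real.log n := Real.log_pos hn1
  have hL2 : Real.log 2 ≤ Real.log n := by
    refine Real.log_le_log (by norm_num) ?_
    exact_mod_cast hn
  have hL69 : (0.6931471803 : ℝ) < Real.log n := lt_of_lt_of_le Real.log_two_gt_d9 hL2
  have hd0 : (0:ℝ) < d := by exact_mod_cast hd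
  have hk0 : (0:ℝ) < k := by exact_mod_cast hk
  -- the exponent
  set s : ℕ := Nat.clog 2 (max 2 ⌈Real.log n⌉₊) with hs_def
  set q : ℕ := 2 ^ s with hq_def
  have hMq : max 2 ⌈Real.log n⌉₊ ≤ q := Nat.le_pow_clog (by norm_num) _
  have hq2 : 2 ≤ q := le_trans (le_max_left _ _) hMq
  have hq1 : 1 ≤ q := by omega
  have hs1 : 1 ≤ s := by
    rcases Nat.eq_zero_or_pos s with h | h
    · exfalso
      have : q = 1 := by rw [hq_def, h, pow_zero]
      omega
    · exact h
  have hlogq : Real.log n ≤ (q:ℝ) := by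
    calc Real.log n ≤ (⌈Real.log n⌉₊ : ℝ) := Nat.le_ceil _
      _ ≤ ((max 2 ⌈Real.log n⌉₊ : ℕ) : ℝ) := by exact_mod_cast le_max_right 2 _
      _ ≤ (q : ℝ) := by exact_mod_cast hMq
  have hqub : (q : ℝ) ≤ 2 * Real.log n + 4 := by
    have hMx2 : 1 < max 2 ⌈Real.log n⌉₊ := lt_of_lt_of_le one_lt_two (le_max_left _ _)
    have h1 : 2 ^ (s - 1) < max 2 ⌈Real.log n⌉₊ := by
      rw [hs_def]
      exact Nat.pow_pred_clog_lt_self (by norm_num) hMx2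
    have h2 : q ≤ 2 * max 2 ⌈Real.log n⌉₊ := by
      have h3 : q = 2 * 2 ^ (s - 1) := by
        rw [hq_def, ← pow_succ']
        congr 1
        omega
      omega
    have h3 : (⌈Real.log n⌉₊ : ℝ) < Real.log n + 1 := Nat.ceil_lt_add_one hL.le
    have h4 : ((max 2 ⌈Real.log n⌉₊ : ℕ) : ℝ) ≤ Real.log n + 2 := by
      rw [Nat.cast_max]
      refine max_le (by norm_num; linarith) (by linarith)
    calc (q:ℝ) ≤ 2 * ((max 2 ⌈Real.log n⌉₊ : ℕ) : ℝ) := by exact_mod_cast h2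
      _ ≤ 2 * (Real.log n + 2) := by linarith
      _ = 2 * Real.log n + 4 := by ring
  have h9q : 9 * (q:ℝ) ≤ 100 * Real.log n := by linarith
  have hn3q : (n:ℝ) ≤ 3 ^ q := by
    calc (n:ℝ) = Real.exp (Real.log n) := (Real.exp_log hn0).symm
      _ ≤ Real.exp q := Real.exp_le_exp.2 hlogq
      _ = Real.exp 1 ^ q := by rw [← Real.exp_nat_mul, mul_one]
      _ ≤ 3 ^ q := by
          refine pow_le_pow_left₀ (Real.exp_pos 1).le ?_ q
          linarith [Real.exp_one_lt_d9]
  -- matrices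
  set A : Fin k → Matrix (Fin n) P ℝ :=
    fun i => Matrix.of fun v p => if (v, p) ∈ G i then (1:ℝ) else 0 with hA_def
  have hA_apply : ∀ i v p, A i v p = if (v, p) ∈ G i then (1:ℝ) else 0 := fun i v p => rfl
  have hA_nice : ∀ i, Nice (A i) := by
    intro i
    refine ⟨fun v p => ?_, fun v => ?_, fun p => ?_⟩
    · rw [hA_apply]
      split_ifs <;> norm_num
    · have h1 : (∑ p, A i v p) = ((univ.filter fun p => (v, p) ∈ G i).card : ℝ) := by
        simp_rw [hA_apply]
        rw [Finset.sum_boole]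
      rw [h1]
      have h2 : (univ.filter fun p => (v, p) ∈ G i).card ≤ 1 := by
        rw [Finset.card_le_one]
        intro a ha b hb
        simp only [Finset.mem_filter, Finset.mem_univ, true_and] at ha hb
        by_contra hne
        have hdiff : ((v, a) : Fin n × P) ≠ (v, b) := fun hcontra =>
          hne (congrArg Prod.snd hcontra)
        exact (hmatch i (Finset.mem_coe.2 ha) (Finset.mem_coe.2 hb) hdiff).1 rfl
      exact_mod_cast h2
    · have h1 : (∑ v, A i v p) = ((univ.filter fun v => (v, p) ∈ G i).card : ℝ) := by
        simp_rw [hA_apply]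
        rw [Finset.sum_boole]
      rw [h1]
      have h2 : (univ.filter fun v => (v, p) ∈ G i).card ≤ 1 := by
        rw [Finset.card_le_one]
        intro a ha b hb
        simp only [Finset.mem_filter, Finset.mem_univ, true_and] at ha hb
        by_contra hne
        have hdiff : ((a, p) : Fin n × P) ≠ (b, p) := fun hcontra =>
          hne (congrArg Prod.fst hcontra)
        exact (hmatch i (Finset.mem_coe.2 ha) (Finset.mem_coe.2 hb) hdiff).2 rfl
      exact_mod_cast h2
  -- the moment quantities
  set W : (Fin k → Bool) → ℝ := fun b =>
    (n:ℝ) ^ q * ((Fintype.card P : ℝ)) ^ q *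
      ((Gm (∑ i, pmo (b i) • A i)) ^ q).trace with hW_def
  have hqeq2 : q = 2 * 2 ^ (s - 1) := by
    rw [hq_def, ← pow_succ']
    congr 1
    omega
  have htr_nonneg : ∀ b : Fin k → Bool,
      0 ≤ ((Gm (∑ i, pmo (b i) • A i)) ^ q).trace := by
    intro b
    rw [hqeq2]
    exact trace_pow_nonneg _ _
  have hW_nonneg : ∀ b, 0 ≤ W b := by
    intro b
    rw [hW_def]
    exact mul_nonneg (mul_nonneg (by positivity) (by positivity)) (htr_nonneg b)
  set R : (Fin k → Bool) → ℝ := fun b => (W b) ^ ((((2 * q : ℕ)) : ℝ))⁻¹ with hR_def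
  have hR_nonneg : ∀ b, 0 ≤ R b := fun b => Real.rpow_nonneg (hW_nonneg b) _
  have hRpow : ∀ b, (R b) ^ (2 * q) = W b := by
    intro b
    rw [hR_def]
    exact Real.rpow_inv_natCast_pow (hW_nonneg b) (by omega)
  -- the supremum bound
  have hval : ∀ b : Fin k → Bool,
      (⨆ x : Fin n → Bool, ⨆ y : P → Bool,
        ∑ i, pmo (b i) * ∑ e ∈ G i, pmo (x e.1) * pmo (y e.2)) ≤ R b := by
    intro b
    refine ciSup_le fun x => ciSup_le fun y => ?_
    rw [dot_eq G A hA_apply b x y]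
    have hFpow : ((fun v => pmo (x v)) ⬝ᵥ (∑ i, pmo (b i) • A i) *ᵥ (fun p => pmo (y p)))
        ^ (2 * q) ≤ W b := by
      have h := main_bound (∑ i, pmo (b i) • A i) (fun p => pmo (y p)) (fun v => pmo (x v))
        (fun v => pmo_sq _) (fun p => pmo_sq _) s hs1
      rw [hW_def, hq_def]
      simpa [Fintype.card_fin] using h
    rcases le_or_gt ((fun v => pmo (x v)) ⬝ᵥ (∑ i, pmo (b i) • A i) *ᵥ (fun p => pmo (y p))) 0
      with hF0 | hF0
    · exact hF0.trans (hR_nonneg b)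
    · have h2qne : (((2 * q : ℕ)) : ℝ) ≠ 0 := by
        have : (0:ℕ) < 2 * q := by omega
        exact_mod_cast this.ne'
      have h1 := Real.rpow_le_rpow (by positivity) hFpow
        (by positivity : (0:ℝ) ≤ ((((2 * q : ℕ)) : ℝ))⁻¹)
      rw [← Real.rpow_natCast
        ((fun v => pmo (x v)) ⬝ᵥ (∑ i, pmo (b i) • A i) *ᵥ (fun p => pmo (y p))) (2 * q),
        ← Real.rpow_mul hF0.le, mul_inv_cancel₀ h2qne, Real.rpow_one] at h1
      exact h1
  -- summing up
  have hsum_le : (∑ b : Fin k → Bool,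
      ⨆ x : Fin n → Bool, ⨆ y : P → Bool,
        ∑ i, pmo (b i) * ∑ e ∈ G i, pmo (x e.1) * pmo (y e.2)) ≤ ∑ b, R b :=
    Finset.sum_le_sum fun b _ => hval b
  have hcard2k : ((#(univ : Finset (Fin k → Bool))) : ℝ) = 2 ^ k := by
    rw [Finset.card_univ, Fintype.card_fun]
    simp
  have h2q_eq : 2 * q = (2 * q - 1) + 1 := by omega
  have hjen := pow_sum_div_card_le_sum_pow (s := (univ : Finset (Fin k → Bool)))
      (f := R) (fun b _ => hR_nonneg b) (2 * q - 1)
  rw [← h2q_eq, hcard2k] at hjen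
  have hsumW : ∑ b : Fin k → Bool, (R b) ^ (2 * q) = ∑ b, W b :=
    Finset.sum_congr rfl fun b _ => hRpow b
  have hT : ∑ b : Fin k → Bool, ((Gm (∑ i, pmo (b i) • A i)) ^ q).trace
      ≤ 2 ^ k * (n : ℝ) * ((3:ℝ) * q * k) ^ q := sum_trace_le A hA_nice q hq1
  have hWsum : ∑ b : Fin k → Bool, W b
      = (n:ℝ) ^ q * ((Fintype.card P : ℝ)) ^ q *
          (∑ b : Fin k → Bool, ((Gm (∑ i, pmo (b i) • A i)) ^ q).trace) := by
    rw [hW_def, ← Finset.mul_sum]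
  -- numeric endgame
  have hpos2k : (0:ℝ) < 2 ^ k := by positivity
  have hfinal : (n:ℝ) ^ (q + 1) * ((Fintype.card P : ℝ)) ^ q * ((3:ℝ) * q * k) ^ q
      ≤ (10 * (n:ℝ) * k * Real.sqrt (Real.log n / d)) ^ (2 * q) := by
    have hz : (0:ℝ) ≤ Real.log n / d := by positivity
    have hRHS : (10 * (n:ℝ) * k * Real.sqrt (Real.log n / d)) ^ (2 * q)
        = ((100:ℝ) * ((n:ℝ) ^ 2 * (k:ℝ) ^ 2) * (Real.log n / d)) ^ q := by
      rw [pow_mul]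
      congr 1
      rw [mul_pow, mul_pow, Real.sq_sqrt hz]
      ring
    rw [hRHS]
    have h1 : ((Fintype.card P : ℝ)) ^ q ≤ ((n:ℝ) * k / d) ^ q :=
      pow_le_pow_left₀ (by positivity) hcard q
    calc (n:ℝ) ^ (q + 1) * ((Fintype.card P : ℝ)) ^ q * ((3:ℝ) * q * k) ^ q
        ≤ (n:ℝ) ^ (q + 1) * (((n:ℝ) * k / d)) ^ q * ((3:ℝ) * q * k) ^ q := by
          exact mul_le_mul_of_nonneg_right
            (mul_le_mul_of_nonneg_left h1 (by positivity)) (by positivity)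
      _ = (n:ℝ) * ((n:ℝ) * ((n:ℝ) * k / d) * ((3:ℝ) * q * k)) ^ q := by
          rw [pow_succ, mul_pow, mul_pow]
          ring
      _ ≤ (3:ℝ) ^ q * ((n:ℝ) * ((n:ℝ) * k / d) * ((3:ℝ) * q * k)) ^ q := by
          refine mul_le_mul_of_nonneg_right hn3q (by positivity)
      _ = ((3:ℝ) * ((n:ℝ) * ((n:ℝ) * k / d) * ((3:ℝ) * q * k))) ^ q := (mul_pow _ _ _).symm
      _ ≤ ((100:ℝ) * ((n:ℝ) ^ 2 * (k:ℝ) ^ 2) * (Real.log n / d)) ^ q := by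
          refine pow_le_pow_left₀ (by positivity) ?_ q
          have he1 : (3:ℝ) * ((n:ℝ) * ((n:ℝ) * k / d) * ((3:ℝ) * q * k))
              = (9 * q) * ((n:ℝ) ^ 2 * (k:ℝ) ^ 2 / d) := by ring
          have he2 : (100:ℝ) * ((n:ℝ) ^ 2 * (k:ℝ) ^ 2) * (Real.log n / d)
              = (100 * Real.log n) * ((n:ℝ) ^ 2 * (k:ℝ) ^ 2 / d) := by ring
          rw [he1, he2]
          exact mul_le_mul_of_nonneg_right h9q (by positivity)
  have hstep1 : ((∑ b : Fin k → Bool, R b) / 2 ^ k) ^ (2 * q)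
      ≤ (∑ b : Fin k → Bool, W b) / 2 ^ k := by
    rw [div_pow, div_le_div_iff₀ (by positivity) hpos2k]
    have hjen2 : (∑ b : Fin k → Bool, R b) ^ (2 * q)
        ≤ (∑ b : Fin k → Bool, W b) * ((2:ℝ) ^ k) ^ (2 * q - 1) := by
      rw [div_le_iff₀ (by positivity)] at hjen
      calc (∑ b : Fin k → Bool, R b) ^ (2 * q)
          ≤ (∑ b : Fin k → Bool, (R b) ^ (2 * q)) * ((2:ℝ) ^ k) ^ (2 * q - 1) := hjen
        _ = (∑ b : Fin k → Bool, W b) * ((2:ℝ) ^ k) ^ (2 * q - 1) := by rw [hsumW]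
    have hpw : ((2:ℝ) ^ k) ^ (2 * q - 1) * (2:ℝ) ^ k = ((2:ℝ) ^ k) ^ (2 * q) := by
      rw [← pow_succ]
      congr 1
      omega
    calc (∑ b : Fin k → Bool, R b) ^ (2 * q) * (2:ℝ) ^ k
        ≤ ((∑ b : Fin k → Bool, W b) * ((2:ℝ) ^ k) ^ (2 * q - 1)) * (2:ℝ) ^ k :=
          mul_le_mul_of_nonneg_right hjen2 (by positivity)
      _ = (∑ b : Fin k → Bool, W b) * ((2:ℝ) ^ k) ^ (2 * q) := by rw [mul_assoc, hpw]
  have hstep2 : (∑ b : Fin k → Bool, W b) / 2 ^ k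
      ≤ (n:ℝ) ^ (q + 1) * ((Fintype.card P : ℝ)) ^ q * ((3:ℝ) * q * k) ^ q := by
    rw [hWsum, div_le_iff₀ hpos2k]
    calc (n:ℝ) ^ q * ((Fintype.card P : ℝ)) ^ q *
          (∑ b : Fin k → Bool, ((Gm (∑ i, pmo (b i) • A i)) ^ q).trace)
        ≤ (n:ℝ) ^ q * ((Fintype.card P : ℝ)) ^ q *
            (2 ^ k * (n : ℝ) * ((3:ℝ) * q * k) ^ q) :=
          mul_le_mul_of_nonneg_left hT (by positivity)
      _ = ((n:ℝ) ^ (q + 1) * ((Fintype.card P : ℝ)) ^ q * ((3:ℝ) * q * k) ^ q) * 2 ^ k := by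
          rw [pow_succ]
          ring
  have hρ : (∑ b : Fin k → Bool, R b) / 2 ^ k
      ≤ 10 * (n:ℝ) * k * Real.sqrt (Real.log n / d) := by
    refine le_of_pow_le_pow_left₀ (by omega : 2 * q ≠ 0) (by positivity) ?_
    exact hstep1.trans (hstep2.trans hfinal)
  calc (∑ b : Fin k → Bool,
          ⨆ x : Fin n → Bool, ⨆ y : P → Bool,
            ∑ i, pmo (b i) * ∑ e ∈ G i, pmo (x e.1) * pmo (y e.2)) / 2 ^ k
      ≤ (∑ b : Fin k → Bool, R b) / 2 ^ k := by
        gcongr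
    _ ≤ 10 * (n:ℝ) * k * Real.sqrt (Real.log n / d) := hρ
end
end

section
/- Let H_1, …, H_k be 3-uniform hypergraph matchings on [n], let m := Σ_{i=1}^k |H_i|, fix b ∈ {-1,1}^k, and let f(x) := Σ_{i=1}^k b_i Σ_{C∈H_i} ∏_{v∈C} x_v with val(f) := max_{x∈{-1,1}^n} f(x). For a partition of [k] into sets L and R, define f_{L,R}(x) := Σ_{i∈L, j∈R} Σ_{u∈[n]} Σ_{(u,C)∈H_i, (u,C')∈H_j} b_i b_j (∏_{v∈C} x_v)(∏_{w∈C'} x_w), where (u,C) ∈ H_i means u ∈ [n], C ⊆ [n], |C| = 2, u ∉ C, and {u} ∪ C ∈ H_i; let val(f_{L,R}) := max_{x∈{-1,1}^n} f_{L,R}(x). Let (L,R) be random: each element of [k] is placed in L independently with probability 1/2 and R := [k] \ L. Then 9 · val(f)^2 ≤ 3 n m + 4 n · E_{(L,R)}[val(f_{L,R})]. -/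
open Finset
open scoped Classical

noncomputable section

lemma pmo_sq (b : Bool) : pmo b ^ 2 = 1 := by cases b <;> simp [pmo]

namespace CSaux
variable {n : ℕ}

def P (H : Finset (Finset (Fin n))) (u : Fin n) : Finset (Finset (Fin n)) :=
  univ.filter (fun C => C.card = 2 ∧ u ∉ C ∧ insert u C ∈ H)

def sP (x : Fin n → Bool) (H : Finset (Finset (Fin n))) (u : Fin n) : ℝ :=
  ∑ C ∈ P H u, ∏ v ∈ C, pmo (x v)

lemma sum_P (H : Finset (Finset (Fin n))) (hc : ∀ E ∈ H, E.card = 3)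
    (g : Fin n → Finset (Fin n) → ℝ) :
    ∑ u, ∑ C ∈ P H u, g u C = ∑ E ∈ H, ∑ u ∈ E, g u (E.erase u) := by
  rw [Finset.sum_sigma', Finset.sum_sigma']
  refine Finset.sum_nbij' (fun p => (⟨insert p.1 p.2, p.1⟩ : Σ _ : Finset (Fin n), Fin n))
    (fun q => (⟨q.2, q.1.erase q.2⟩ : Σ _ : Fin n, Finset (Fin n))) ?_ ?_ ?_ ?_ ?_
  · rintro ⟨u, C⟩ hp
    simp only [Finset.mem_sigma, Finset.mem_univ, true_and, P, Finset.mem_filter] at hp ⊢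
    exact ⟨hp.2.2, Finset.mem_insert_self _ _⟩
  · rintro ⟨E, u⟩ hq
    simp only [Finset.mem_sigma] at hq
    simp only [Finset.mem_sigma, Finset.mem_univ, true_and, P, Finset.mem_filter]
    refine ⟨?_, Finset.notMem_erase _ _, ?_⟩
    · rw [Finset.card_erase_of_mem hq.2, hc E hq.1]
    · rw [Finset.insert_erase hq.2]; exact hq.1
  · rintro ⟨u, C⟩ hp
    simp only [P, Finset.mem_sigma, Finset.mem_filter, Finset.mem_univ, true_and] at hp
    simp [Finset.erase_insert hp.2.1]
  · rintro ⟨E, u⟩ hq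
    simp only [Finset.mem_sigma] at hq
    simp [Finset.insert_erase hq.2]
  · rintro ⟨u, C⟩ hp
    simp only [P, Finset.mem_sigma, Finset.mem_filter, Finset.mem_univ, true_and] at hp
    simp [Finset.erase_insert hp.2.1]

lemma card_P_le (H : Finset (Finset (Fin n))) (hd : Set.Pairwise (H : Set (Finset (Fin n))) Disjoint)
    (u : Fin n) : (P H u).card ≤ 1 := by
  rw [Finset.card_le_one]
  intro C hC C' hC'
  simp only [P, Finset.mem_filter] at hC hC'
  have h1 : insert u C ∈ H := hC.2.2.2
  have h2 : insert u C' ∈ H := hC'.2.2.2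
  have heq : insert u C = insert u C' := by
    by_contra hne
    have := hd h1 h2 hne
    exact absurd (Finset.mem_insert_self u C') (Finset.disjoint_left.mp this (Finset.mem_insert_self u C))
  have : (insert u C).erase u = (insert u C').erase u := by rw [heq]
  rwa [Finset.erase_insert hC.2.2.1, Finset.erase_insert hC'.2.2.1] at this

lemma sq_sum_P (H : Finset (Finset (Fin n))) (hd : Set.Pairwise (H : Set (Finset (Fin n))) Disjoint)
    (u : Fin n) (x : Fin n → Bool) :
    (sP x H u) ^ 2 = ((P H u).card : ℝ) := by
  rcases Finset.eq_empty_or_nonempty (P H u) with h | ⟨C, hC⟩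
  · simp [sP, h]
  · have hP : P H u = {C} := by
      apply Finset.eq_singleton_iff_unique_mem.mpr
      refine ⟨hC, fun C' hC' => ?_⟩
      have := card_P_le H hd u
      rw [Finset.card_le_one] at this
      exact this C' hC' C hC
    rw [sP, hP]
    simp only [Finset.sum_singleton, Finset.card_singleton, Nat.cast_one]
    rw [← Finset.prod_pow]
    simp [pmo_sq]

lemma count_L {k : ℕ} (i j : Fin k) (hij : i ≠ j) :
    (univ.filter (fun L : Finset (Fin k) => i ∈ L ∧ j ∉ L)).card = 2 ^ (k - 2) := by
  have : (univ.filter (fun L : Finset (Fin k) => i ∈ L ∧ j ∉ L)).card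
      = ((univ.erase i).erase j).powerset.card := by
    apply Finset.card_nbij' (fun L => L.erase i) (fun S => insert i S)
    · intro L hL
      simp only [Finset.mem_coe, Finset.mem_filter] at hL
      simp only [Finset.mem_coe, Finset.mem_powerset]
      intro v hv
      rw [Finset.mem_erase] at hv
      rw [Finset.mem_erase, Finset.mem_erase]
      exact ⟨fun h => hL.2.2 (h ▸ hv.2), hv.1, Finset.mem_univ _⟩
    · intro S hS
      simp only [Finset.mem_coe, Finset.mem_powerset] at hS
      have hjS : j ∉ S := fun h => (Finset.mem_erase.mp (hS h)).1 rfl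
      simp only [Finset.mem_coe, Finset.mem_filter, Finset.mem_univ, true_and]
      exact ⟨Finset.mem_insert_self _ _, by simp [Finset.mem_insert, hjS, hij.symm]⟩
    · intro L hL
      simp only [Finset.mem_coe, Finset.mem_filter] at hL
      exact Finset.insert_erase hL.2.1
    · intro S hS
      simp only [Finset.mem_coe, Finset.mem_powerset] at hS
      have hiS : i ∉ S := fun h => ((Finset.mem_erase.mp ((Finset.mem_erase.mp (hS h)).2)).1) rfl
      exact Finset.erase_insert hiS
  rw [this, Finset.card_powerset, Finset.card_erase_of_mem
      (Finset.mem_erase.mpr ⟨hij.symm, Finset.mem_univ j⟩),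
    Finset.card_erase_of_mem (Finset.mem_univ i), Finset.card_univ, Fintype.card_fin, Nat.sub_sub]

-- the statement's inner double sum equals b_i b_j ∑_u sP_i sP_j
lemma inner_eq (Hi Hj : Finset (Finset (Fin n))) (bi bj : ℝ) (x : Fin n → Bool) :
    (∑ u : Fin n, ∑ CC' ∈ Finset.univ.filter
        (fun CC' : Finset (Fin n) × Finset (Fin n) =>
          CC'.1.card = 2 ∧ u ∉ CC'.1 ∧ insert u CC'.1 ∈ Hi ∧
          CC'.2.card = 2 ∧ u ∉ CC'.2 ∧ insert u CC'.2 ∈ Hj),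
      bi * bj * (∏ v ∈ CC'.1, pmo (x v)) * ∏ w ∈ CC'.2, pmo (x w))
    = bi * bj * ∑ u, sP x Hi u * sP x Hj u := by
  rw [Finset.mul_sum]
  refine Finset.sum_congr rfl fun u _ => ?_
  have hset : (Finset.univ.filter
        (fun CC' : Finset (Fin n) × Finset (Fin n) =>
          CC'.1.card = 2 ∧ u ∉ CC'.1 ∧ insert u CC'.1 ∈ Hi ∧
          CC'.2.card = 2 ∧ u ∉ CC'.2 ∧ insert u CC'.2 ∈ Hj))
      = (P Hi u) ×ˢ (P Hj u) := by
    ext ⟨C, C'⟩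
    simp [P, Finset.mem_product, and_assoc]
  rw [hset, Finset.sum_product]
  unfold sP
  rw [Finset.sum_mul_sum (P Hi u) (P Hj u) (fun C => ∏ v ∈ C, pmo (x v)) (fun C => ∏ v ∈ C, pmo (x v))]
  simp only [Finset.mul_sum]
  exact Finset.sum_congr rfl fun C _ => Finset.sum_congr rfl fun C' _ => by ring

-- 3 f(x) = ∑_u x_u y_u, edge-wise version
lemma three_f (Hi : Finset (Finset (Fin n))) (hc : ∀ E ∈ Hi, E.card = 3) (x : Fin n → Bool) :
    ∑ u, pmo (x u) * sP x Hi u = 3 * ∑ E ∈ Hi, ∏ v ∈ E, pmo (x v) := by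
  have h := sum_P Hi hc (fun u C => pmo (x u) * ∏ v ∈ C, pmo (x v))
  calc ∑ u, pmo (x u) * sP x Hi u
      = ∑ u, ∑ C ∈ P Hi u, pmo (x u) * ∏ v ∈ C, pmo (x v) := by
        simp only [sP, Finset.mul_sum]
    _ = ∑ E ∈ Hi, ∑ u ∈ E, pmo (x u) * ∏ v ∈ E.erase u, pmo (x v) := h
    _ = ∑ E ∈ Hi, ∑ u ∈ E, ∏ v ∈ E, pmo (x v) := by
        refine Finset.sum_congr rfl fun E _ => Finset.sum_congr rfl fun u hu => ?_
        exact Finset.mul_prod_erase E (fun v => pmo (x v)) hu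
    _ = 3 * ∑ E ∈ Hi, ∏ v ∈ E, pmo (x v) := by
        rw [Finset.mul_sum]
        refine Finset.sum_congr rfl fun E hE => ?_
        rw [Finset.sum_const, hc E hE, nsmul_eq_mul]
        norm_num

lemma diag (Hi : Finset (Finset (Fin n))) (h : IsMatching 3 Hi) (x : Fin n → Bool) :
    ∑ u, (sP x Hi u) ^ 2 = 3 * (Hi.card : ℝ) := by
  calc ∑ u, (sP x Hi u) ^ 2
      = ∑ u, ((P Hi u).card : ℝ) := Finset.sum_congr rfl fun u _ => sq_sum_P Hi h.2 u x
    _ = ∑ u, ∑ _C ∈ P Hi u, (1 : ℝ) := by simp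
    _ = ∑ E ∈ Hi, ∑ _u ∈ E, (1 : ℝ) := sum_P Hi h.1 _
    _ = ∑ E ∈ Hi, (3 : ℝ) := by
        refine Finset.sum_congr rfl fun E hE => ?_
        rw [Finset.sum_const, h.1 E hE, nsmul_eq_mul]
        norm_num
    _ = 3 * (Hi.card : ℝ) := by rw [Finset.sum_const, nsmul_eq_mul]; ring

end CSaux
namespace CSaux

lemma keyineq {n k : ℕ} (H : Fin k → Finset (Finset (Fin n)))
    (hmatch : ∀ i, IsMatching 3 (H i)) (b : Fin k → Bool) (x : Fin n → Bool) :
    9 * (∑ i, pmo (b i) * ∑ C ∈ H i, ∏ v ∈ C, pmo (x v)) ^ 2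
      ≤ 3 * n * (∑ i, ((H i).card : ℝ))
        + n * ∑ i, ∑ j ∈ univ.erase i,
            pmo (b i) * pmo (b j) * ∑ u, sP x (H i) u * sP x (H j) u := by
  set y : Fin n → ℝ := fun u => ∑ i, pmo (b i) * sP x (H i) u with hy
  have h1 : ∑ u, pmo (x u) * y u
      = 3 * ∑ i, pmo (b i) * ∑ C ∈ H i, ∏ v ∈ C, pmo (x v) := by
    calc ∑ u, pmo (x u) * y u
        = ∑ u, ∑ i, pmo (b i) * (pmo (x u) * sP x (H i) u) := by
          refine Finset.sum_congr rfl fun u _ => ?_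
          rw [hy, Finset.mul_sum]
          exact Finset.sum_congr rfl fun i _ => by ring
      _ = ∑ i, pmo (b i) * ∑ u, pmo (x u) * sP x (H i) u := by
          rw [Finset.sum_comm]
          exact Finset.sum_congr rfl fun i _ => (Finset.mul_sum _ _ _).symm
      _ = ∑ i, pmo (b i) * (3 * ∑ C ∈ H i, ∏ v ∈ C, pmo (x v)) :=
          Finset.sum_congr rfl fun i _ => by rw [three_f (H i) (hmatch i).1 x]
      _ = 3 * ∑ i, pmo (b i) * ∑ C ∈ H i, ∏ v ∈ C, pmo (x v) := by
          rw [Finset.mul_sum]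
          exact Finset.sum_congr rfl fun i _ => by ring
  have hoff : ∀ i j : Fin k, ∑ u, (pmo (b i) * sP x (H i) u) * (pmo (b j) * sP x (H j) u)
      = pmo (b i) * pmo (b j) * ∑ u, sP x (H i) u * sP x (H j) u := by
    intro i j
    rw [Finset.mul_sum]
    exact Finset.sum_congr rfl fun u _ => by ring
  have h2 : ∑ u, (y u) ^ 2
      = 3 * (∑ i, ((H i).card : ℝ))
        + ∑ i, ∑ j ∈ univ.erase i,
            pmo (b i) * pmo (b j) * ∑ u, sP x (H i) u * sP x (H j) u := by
    calc ∑ u, (y u) ^ 2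
        = ∑ u, ∑ i, ∑ j, (pmo (b i) * sP x (H i) u) * (pmo (b j) * sP x (H j) u) := by
          refine Finset.sum_congr rfl fun u _ => ?_
          rw [hy, sq, Finset.sum_mul_sum]
      _ = ∑ i, ∑ j, ∑ u, (pmo (b i) * sP x (H i) u) * (pmo (b j) * sP x (H j) u) := by
          rw [Finset.sum_comm]
          exact Finset.sum_congr rfl fun i _ => Finset.sum_comm
      _ = ∑ i, (∑ u, (pmo (b i) * sP x (H i) u) * (pmo (b i) * sP x (H i) u)
            + ∑ j ∈ univ.erase i, ∑ u, (pmo (b i) * sP x (H i) u) * (pmo (b j) * sP x (H j) u)) :=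
          Finset.sum_congr rfl fun i _ => (Finset.add_sum_erase univ _ (Finset.mem_univ i)).symm
      _ = ∑ i, (3 * ((H i).card : ℝ)
            + ∑ j ∈ univ.erase i,
                pmo (b i) * pmo (b j) * ∑ u, sP x (H i) u * sP x (H j) u) := by
          refine Finset.sum_congr rfl fun i _ => ?_
          congr 1
          · calc ∑ u, (pmo (b i) * sP x (H i) u) * (pmo (b i) * sP x (H i) u)
                = ∑ u, (sP x (H i) u) ^ 2 := by
                  refine Finset.sum_congr rfl fun u _ => ?_
                  have hb := pmo_sq (b i)
                  nlinarith [hb]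
              _ = 3 * ((H i).card : ℝ) := diag (H i) (hmatch i) x
          · exact Finset.sum_congr rfl fun j _ => hoff i j
      _ = 3 * (∑ i, ((H i).card : ℝ))
            + ∑ i, ∑ j ∈ univ.erase i,
                pmo (b i) * pmo (b j) * ∑ u, sP x (H i) u * sP x (H j) u := by
          rw [Finset.sum_add_distrib, Finset.mul_sum]
  have hcs := Finset.sum_mul_sq_le_sq_mul_sq univ (fun u => pmo (x u)) y
  have hxs : ∑ u : Fin n, (pmo (x u)) ^ 2 = (n : ℝ) := by
    simp [pmo_sq]
  have h9 : 9 * (∑ i, pmo (b i) * ∑ C ∈ H i, ∏ v ∈ C, pmo (x v)) ^ 2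
      = (∑ u, pmo (x u) * y u) ^ 2 := by rw [h1]; ring
  rw [h9]
  calc (∑ u, pmo (x u) * y u) ^ 2
      ≤ (∑ u : Fin n, (pmo (x u)) ^ 2) * ∑ u, (y u) ^ 2 := hcs
    _ = (n : ℝ) * ∑ u, (y u) ^ 2 := by rw [hxs]
    _ = 3 * n * (∑ i, ((H i).card : ℝ))
        + n * ∑ i, ∑ j ∈ univ.erase i,
            pmo (b i) * pmo (b j) * ∑ u, sP x (H i) u * sP x (H j) u := by
        rw [h2]; ring

lemma avg {n k : ℕ} (H : Fin k → Finset (Finset (Fin n))) (b : Fin k → Bool)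
    (x : Fin n → Bool) :
    ∑ L : Finset (Fin k), ∑ i ∈ L, ∑ j ∈ Lᶜ,
        pmo (b i) * pmo (b j) * ∑ u, sP x (H i) u * sP x (H j) u
      = 2 ^ k / 4 * ∑ i, ∑ j ∈ univ.erase i,
          pmo (b i) * pmo (b j) * ∑ u, sP x (H i) u * sP x (H j) u := by
  set Q : Fin k → Fin k → ℝ :=
    fun i j => pmo (b i) * pmo (b j) * ∑ u, sP x (H i) u * sP x (H j) u with hQ
  calc ∑ L : Finset (Fin k), ∑ i ∈ L, ∑ j ∈ Lᶜ, Q i j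
      = ∑ L : Finset (Fin k), ∑ i : Fin k, ∑ j : Fin k,
          (if i ∈ L ∧ j ∉ L then Q i j else 0) := by
        refine Finset.sum_congr rfl fun L _ => ?_
        rw [eq_comm]
        calc ∑ i : Fin k, ∑ j : Fin k, (if i ∈ L ∧ j ∉ L then Q i j else 0)
            = ∑ i : Fin k, (if i ∈ L then ∑ j : Fin k, (if j ∈ Lᶜ then Q i j else 0) else 0) := by
              refine Finset.sum_congr rfl fun i _ => ?_
              by_cases hi : i ∈ L
              · simp only [hi, true_and, if_true]
                exact Finset.sum_congr rfl fun j _ => by simp [Finset.mem_compl]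
              · simp [hi]
          _ = ∑ i ∈ L, ∑ j ∈ Lᶜ, Q i j := by
              rw [Finset.sum_ite_mem, Finset.univ_inter]
              exact Finset.sum_congr rfl fun i _ => by
                rw [Finset.sum_ite_mem, Finset.univ_inter]
    _ = ∑ i : Fin k, ∑ j : Fin k,
          ((univ.filter (fun L : Finset (Fin k) => i ∈ L ∧ j ∉ L)).card : ℝ) * Q i j := by
        rw [Finset.sum_comm]
        refine Finset.sum_congr rfl fun i _ => ?_
        rw [Finset.sum_comm]
        refine Finset.sum_congr rfl fun j _ => ?_
        rw [← Finset.sum_filter, Finset.sum_const, nsmul_eq_mul]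
    _ = ∑ i : Fin k, ∑ j ∈ univ.erase i, 2 ^ k / 4 * Q i j := by
        refine Finset.sum_congr rfl fun i _ => ?_
        rw [← Finset.add_sum_erase _ _ (Finset.mem_univ i)]
        have h0 : (univ.filter (fun L : Finset (Fin k) => i ∈ L ∧ i ∉ L)) = ∅ := by
          apply Finset.filter_false_of_mem
          intro L _
          tauto
        rw [h0]
        simp only [Finset.card_empty, Nat.cast_zero, zero_mul, zero_add]
        refine Finset.sum_congr rfl fun j hj => ?_
        have hij : j ≠ i := (Finset.mem_erase.mp hj).1
        rw [count_L i j (Ne.symm hij)]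
        congr 1
        have hk : 2 ≤ k := by
          have h1 : (i : ℕ) < k := i.isLt
          have h2 : (j : ℕ) < k := j.isLt
          have h3 : (i : ℕ) ≠ (j : ℕ) := fun h => (Ne.symm hij) (Fin.ext h)
          omega
        rw [Nat.cast_pow, eq_div_iff (by norm_num : (4:ℝ) ≠ 0)]
        push_cast
        rw [show (4:ℝ) = 2 ^ 2 by norm_num, ← pow_add, show k - 2 + 2 = k by omega]
    _ = 2 ^ k / 4 * ∑ i, ∑ j ∈ univ.erase i, Q i j := by
        rw [Finset.mul_sum]
        exact Finset.sum_congr rfl fun i _ => (Finset.mul_sum _ _ _).symm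

end CSaux

/-- **Cauchy–Schwarz trick.** Let `H 1, …, H k` be `3`-uniform hypergraph matchings on
`[n]`, `m = Σᵢ |H i|`, `b ∈ {-1,1}^k` fixed, `f(x) = Σᵢ b_i Σ_{C ∈ H i} ∏_{v ∈ C} x_v`,
and for a partition `(L, Lᶜ)` of `[k]` let
`f_{L,R}(x) = Σ_{i ∈ L, j ∈ Lᶜ} Σ_u Σ_{(u,C) ∈ H i, (u,C') ∈ H j} b_i b_j x_C x_{C'}`,
where `(u,C) ∈ H i` means `|C| = 2`, `u ∉ C`, `{u} ∪ C ∈ H i`. With `(L, R)` chosen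
uniformly at random (each element of `[k]` in `L` independently with probability 1/2),
`9 · val(f)² ≤ 3 n m + 4 n · E_{(L,R)}[val(f_{L,R})]`. -/
theorem cauchy_schwarz_trick
    (n k : ℕ) (H : Fin k → Finset (Finset (Fin n)))
    (hmatch : ∀ i, IsMatching 3 (H i))
    (b : Fin k → Bool) (m : ℕ) (hm : m = ∑ i, (H i).card) :
    9 * (⨆ x : Fin n → Bool,
          ∑ i, pmo (b i) * ∑ C ∈ H i, ∏ v ∈ C, pmo (x v)) ^ 2
      ≤ 3 * n * m + 4 * n *
        ((∑ L : Finset (Fin k),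
          ⨆ x : Fin n → Bool,
            ∑ i ∈ L, ∑ j ∈ Lᶜ, ∑ u : Fin n,
              ∑ CC' ∈ Finset.univ.filter
                  (fun CC' : Finset (Fin n) × Finset (Fin n) =>
                    CC'.1.card = 2 ∧ u ∉ CC'.1 ∧ insert u CC'.1 ∈ H i ∧
                    CC'.2.card = 2 ∧ u ∉ CC'.2 ∧ insert u CC'.2 ∈ H j),
                pmo (b i) * pmo (b j) *
                  (∏ v ∈ CC'.1, pmo (x v)) * ∏ w ∈ CC'.2, pmo (x w)) / 2 ^ k) := by
  classical
  obtain ⟨x₀, hx₀⟩ := Finite.exists_max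
    (fun x : Fin n → Bool => ∑ i, pmo (b i) * ∑ C ∈ H i, ∏ v ∈ C, pmo (x v))
  have hsup : (⨆ x : Fin n → Bool, ∑ i, pmo (b i) * ∑ C ∈ H i, ∏ v ∈ C, pmo (x v))
      = ∑ i, pmo (b i) * ∑ C ∈ H i, ∏ v ∈ C, pmo (x₀ v) :=
    le_antisymm (ciSup_le hx₀) (le_ciSup
      (f := fun x : Fin n → Bool => ∑ i, pmo (b i) * ∑ C ∈ H i, ∏ v ∈ C, pmo (x v))
      (Set.Finite.bddAbove (Set.finite_range _)) x₀)
  rw [hsup]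
  have hkey := CSaux.keyineq H hmatch b x₀
  have havg := CSaux.avg H b x₀
  have hLB : ∀ L : Finset (Fin k),
      (∑ i ∈ L, ∑ j ∈ Lᶜ,
        pmo (b i) * pmo (b j) * ∑ u, CSaux.sP x₀ (H i) u * CSaux.sP x₀ (H j) u)
      ≤ ⨆ x : Fin n → Bool,
            ∑ i ∈ L, ∑ j ∈ Lᶜ, ∑ u : Fin n,
              ∑ CC' ∈ Finset.univ.filter
                  (fun CC' : Finset (Fin n) × Finset (Fin n) =>
                    CC'.1.card = 2 ∧ u ∉ CC'.1 ∧ insert u CC'.1 ∈ H i ∧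
                    CC'.2.card = 2 ∧ u ∉ CC'.2 ∧ insert u CC'.2 ∈ H j),
                pmo (b i) * pmo (b j) *
                  (∏ v ∈ CC'.1, pmo (x v)) * ∏ w ∈ CC'.2, pmo (x w) := by
    intro L
    have heq : (∑ i ∈ L, ∑ j ∈ Lᶜ, ∑ u : Fin n,
              ∑ CC' ∈ Finset.univ.filter
                  (fun CC' : Finset (Fin n) × Finset (Fin n) =>
                    CC'.1.card = 2 ∧ u ∉ CC'.1 ∧ insert u CC'.1 ∈ H i ∧
                    CC'.2.card = 2 ∧ u ∉ CC'.2 ∧ insert u CC'.2 ∈ H j),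
                pmo (b i) * pmo (b j) *
                  (∏ v ∈ CC'.1, pmo (x₀ v)) * ∏ w ∈ CC'.2, pmo (x₀ w))
        = ∑ i ∈ L, ∑ j ∈ Lᶜ,
            pmo (b i) * pmo (b j) * ∑ u, CSaux.sP x₀ (H i) u * CSaux.sP x₀ (H j) u :=
      Finset.sum_congr rfl fun i _ => Finset.sum_congr rfl fun j _ =>
        CSaux.inner_eq (H i) (H j) _ _ x₀
    rw [← heq]
    exact le_ciSup
      (f := fun x : Fin n → Bool =>
        ∑ i ∈ L, ∑ j ∈ Lᶜ, ∑ u : Fin n,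
              ∑ CC' ∈ Finset.univ.filter
                  (fun CC' : Finset (Fin n) × Finset (Fin n) =>
                    CC'.1.card = 2 ∧ u ∉ CC'.1 ∧ insert u CC'.1 ∈ H i ∧
                    CC'.2.card = 2 ∧ u ∉ CC'.2 ∧ insert u CC'.2 ∈ H j),
                pmo (b i) * pmo (b j) *
                  (∏ v ∈ CC'.1, pmo (x v)) * ∏ w ∈ CC'.2, pmo (x w))
      (Set.Finite.bddAbove (Set.finite_range _)) x₀
  have hsumLB := Finset.sum_le_sum (s := (univ : Finset (Finset (Fin k)))) (fun L _ => hLB L)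
  have hcast : (m : ℝ) = ∑ i, ((H i).card : ℝ) := by rw [hm]; push_cast; rfl
  have h2k : (0:ℝ) < 2 ^ k := by positivity
  set S : ℝ := ∑ i, ∑ j ∈ univ.erase i,
      pmo (b i) * pmo (b j) * ∑ u, CSaux.sP x₀ (H i) u * CSaux.sP x₀ (H j) u with hS
  have hnS : (n : ℝ) * S ≤ 4 * n *
      ((∑ L : Finset (Fin k),
          ⨆ x : Fin n → Bool,
            ∑ i ∈ L, ∑ j ∈ Lᶜ, ∑ u : Fin n,
              ∑ CC' ∈ Finset.univ.filter
                  (fun CC' : Finset (Fin n) × Finset (Fin n) =>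
                    CC'.1.card = 2 ∧ u ∉ CC'.1 ∧ insert u CC'.1 ∈ H i ∧
                    CC'.2.card = 2 ∧ u ∉ CC'.2 ∧ insert u CC'.2 ∈ H j),
                pmo (b i) * pmo (b j) *
                  (∏ v ∈ CC'.1, pmo (x v)) * ∏ w ∈ CC'.2, pmo (x w)) / 2 ^ k) := by
    have hS' : S = 4 * (∑ L : Finset (Fin k), ∑ i ∈ L, ∑ j ∈ Lᶜ,
        pmo (b i) * pmo (b j) * ∑ u, CSaux.sP x₀ (H i) u * CSaux.sP x₀ (H j) u) / 2 ^ k := by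
      rw [havg]
      field_simp
    rw [hS']
    calc (n : ℝ) * (4 * (∑ L : Finset (Fin k), ∑ i ∈ L, ∑ j ∈ Lᶜ,
        pmo (b i) * pmo (b j) * ∑ u, CSaux.sP x₀ (H i) u * CSaux.sP x₀ (H j) u) / 2 ^ k)
        = 4 * n * ((∑ L : Finset (Fin k), ∑ i ∈ L, ∑ j ∈ Lᶜ,
        pmo (b i) * pmo (b j) * ∑ u, CSaux.sP x₀ (H i) u * CSaux.sP x₀ (H j) u) / 2 ^ k) := by
          ring
      _ ≤ _ := by gcongr
  calc 9 * (∑ i, pmo (b i) * ∑ C ∈ H i, ∏ v ∈ C, pmo (x₀ v)) ^ 2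
      ≤ 3 * n * (∑ i, ((H i).card : ℝ)) + n * S := hkey
    _ = 3 * n * (m : ℝ) + n * S := by rw [hcast]
    _ ≤ _ := by linarith [hnS]
end
end

section
/- Under the Kikuchi setup: for every i ∈ L, every row of B_i has at most 2d nonzero entries, and every column of B_i has at most 2d nonzero entries. -/
open Finset
open scoped Classical

noncomputable section

/-- `(u, C) ∈ H i`: `u ∈ [n]`, `C ⊆ [n]`, `|C| = 2`, `u ∉ C`, and `{u} ∪ C ∈ H i`. -/
def clausePair {n k : ℕ} (H : Fin k → Finset (Finset (Fin n))) (i : Fin k)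
    (u : Fin n) (C : Finset (Fin n)) : Prop :=
  C.card = 2 ∧ u ∉ C ∧ insert u C ∈ H i

/-- `(v⁽¹⁾, w⁽²⁾)` is a half clause in `P i` (relative to the partition `(L, Lᶜ)`). -/
def halfClause {n k : ℕ} (H : Fin k → Finset (Finset (Fin n))) (L : Finset (Fin k))
    (i : Fin k) (v w : Fin n) : Prop :=
  ∃ j ∈ Lᶜ, ∃ (u : Fin n) (C C' : Finset (Fin n)),
    clausePair H i u C ∧ clausePair H j u C' ∧ v ∈ C ∧ w ∈ C'

/-- The first copy `C⁽¹⁾ = C × {0}` of a set `C ⊆ [n]` inside `[n] × [2]`. -/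
def fstCopy {n : ℕ} (C : Finset (Fin n)) : Finset (Fin n × Fin 2) :=
  C ×ˢ ({0} : Finset (Fin 2))

/-- The second copy `C⁽²⁾ = C × {1}` of a set `C ⊆ [n]` inside `[n] × [2]`. -/
def sndCopy {n : ℕ} (C : Finset (Fin n)) : Finset (Fin n × Fin 2) :=
  C ×ˢ ({1} : Finset (Fin 2))

/-- `S ↔_{C,C'} T`. -/
def kikRel {n : ℕ} (C C' : Finset (Fin n)) (S T : Finset (Fin n × Fin 2)) : Prop :=
  symmDiff S T = fstCopy C ∪ sndCopy C' ∧
  (S ∩ fstCopy C).card = 1 ∧ (S ∩ sndCopy C').card = 1 ∧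
  (T ∩ fstCopy C).card = 1 ∧ (T ∩ sndCopy C').card = 1

/-- `S` contains at most one half clause from `P i`. -/
def atMostOneHalf {n k : ℕ} (H : Fin k → Finset (Finset (Fin n))) (L : Finset (Fin k))
    (i : Fin k) (S : Finset (Fin n × Fin 2)) : Prop :=
  (Finset.univ.filter (fun vw : Fin n × Fin n =>
    (vw.1, (0 : Fin 2)) ∈ S ∧ (vw.2, (1 : Fin 2)) ∈ S ∧ halfClause H L i vw.1 vw.2)).card ≤ 1

/-- The `(S,T)` entry of `B^{(i,C,C')}` is `1` iff this predicate holds. -/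
def Bpred {n k : ℕ} (H : Fin k → Finset (Finset (Fin n))) (L : Finset (Fin k))
    (i : Fin k) (C C' : Finset (Fin n)) (S T : Finset (Fin n × Fin 2)) : Prop :=
  kikRel C C' S T ∧ atMostOneHalf H L i S ∧ atMostOneHalf H L i T

/-- The `(S,T)` entry of `B_i = Σ_{j ∈ R} b_j B_{i,j}`, where
`B_{i,j} = Σ_u Σ_{(u,C) ∈ H i, (u,C') ∈ H j} B^{(i,C,C')}`. -/
def Bentry {n k : ℕ} (H : Fin k → Finset (Finset (Fin n))) (L : Finset (Fin k))
    (b : Fin k → Bool) (i : Fin k) (S T : Finset (Fin n × Fin 2)) : ℝ :=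
  ∑ j ∈ Lᶜ, pmo (b j) *
    ∑ u : Fin n,
      ∑ CC' ∈ Finset.univ.filter
          (fun CC' : Finset (Fin n) × Finset (Fin n) =>
            clausePair H i u CC'.1 ∧ clausePair H j u CC'.2),
        (if Bpred H L i CC'.1 CC'.2 S T then (1 : ℝ) else 0)


lemma pmo_ne_zero (b : Bool) : pmo b ≠ 0 := by
  unfold pmo; split <;> norm_num

lemma exists_fst {n : ℕ} {S : Finset (Fin n × Fin 2)} {C : Finset (Fin n)}
    (h : (S ∩ fstCopy C).card = 1) : ∃ v, v ∈ C ∧ (v, (0 : Fin 2)) ∈ S := by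
  obtain ⟨x, hx⟩ := Finset.card_eq_one.mp h
  have hxm : x ∈ S ∩ fstCopy C := hx ▸ Finset.mem_singleton_self x
  rw [Finset.mem_inter] at hxm
  obtain ⟨hxS, hxC⟩ := hxm
  rw [fstCopy, Finset.mem_product, Finset.mem_singleton] at hxC
  exact ⟨x.1, hxC.1, by
    rwa [show ((x.1, (0 : Fin 2)) : Fin n × Fin 2) = x from Prod.ext rfl hxC.2.symm]⟩

lemma exists_snd {n : ℕ} {S : Finset (Fin n × Fin 2)} {C : Finset (Fin n)}
    (h : (S ∩ sndCopy C).card = 1) : ∃ v, v ∈ C ∧ (v, (1 : Fin 2)) ∈ S := by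
  obtain ⟨x, hx⟩ := Finset.card_eq_one.mp h
  have hxm : x ∈ S ∩ sndCopy C := hx ▸ Finset.mem_singleton_self x
  rw [Finset.mem_inter] at hxm
  obtain ⟨hxS, hxC⟩ := hxm
  rw [sndCopy, Finset.mem_product, Finset.mem_singleton] at hxC
  exact ⟨x.1, hxC.1, by
    rwa [show ((x.1, (1 : Fin 2)) : Fin n × Fin 2) = x from Prod.ext rfl hxC.2.symm]⟩

lemma kikRel_symm {n : ℕ} {C C' : Finset (Fin n)} {S T : Finset (Fin n × Fin 2)}
    (h : kikRel C C' T S) : kikRel C C' S T := by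
  obtain ⟨h1, h2, h3, h4, h5⟩ := h
  exact ⟨by rwa [symmDiff_comm], h4, h5, h2, h3⟩

lemma bentry_witness {n k : ℕ} {H : Fin k → Finset (Finset (Fin n))} {L : Finset (Fin k)}
    {b : Fin k → Bool} {i : Fin k} {S T : Finset (Fin n × Fin 2)}
    (h : Bentry H L b i S T ≠ 0) :
    ∃ j ∈ Lᶜ, ∃ u C C', clausePair H i u C ∧ clausePair H j u C' ∧
      Bpred H L i C C' S T := by
  obtain ⟨j, hj, hne⟩ := Finset.exists_ne_zero_of_sum_ne_zero h
  have h2 := (mul_ne_zero_iff.mp hne).2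
  obtain ⟨u, -, h3⟩ := Finset.exists_ne_zero_of_sum_ne_zero h2
  obtain ⟨CC', hCC', h4⟩ := Finset.exists_ne_zero_of_sum_ne_zero h3
  rw [Finset.mem_filter] at hCC'
  refine ⟨j, hj, u, CC'.1, CC'.2, hCC'.2.1, hCC'.2.2, ?_⟩
  by_contra hB
  simp [hB] at h4

lemma key_bound {n k d : ℕ} {H : Fin k → Finset (Finset (Fin n))} {L : Finset (Fin k)}
    {i : Fin k}
    (hm : ∀ i', IsMatching 3 (H i'))
    (hd : ∀ u' v' : Fin n, u' ≠ v' →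
      ∑ i', ((H i').filter (fun C0 => {u', v'} ⊆ C0)).card ≤ d)
    (S : Finset (Fin n × Fin 2)) :
    (Finset.univ.filter (fun T : Finset (Fin n × Fin 2) =>
      ∃ j ∈ Lᶜ, ∃ u C C', clausePair H i u C ∧ clausePair H j u C' ∧
        Bpred H L i C C' S T)).card ≤ 2 * d := by
  set F := Finset.univ.filter (fun T : Finset (Fin n × Fin 2) =>
      ∃ j ∈ Lᶜ, ∃ u C C', clausePair H i u C ∧ clausePair H j u C' ∧
        Bpred H L i C C' S T) with hF
  rcases F.eq_empty_or_nonempty with he | ⟨T₀, hT₀⟩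
  · rw [he]; simp
  rw [hF, Finset.mem_filter] at hT₀
  obtain ⟨-, j₀, hj₀, u₀, C₀, C₀', hc₀, hc₀', hB₀⟩ := hT₀
  obtain ⟨hk₀, hS₀, -⟩ := hB₀
  obtain ⟨v, hvC₀, hvS⟩ := exists_fst hk₀.2.1
  obtain ⟨w, hwC₀', hwS⟩ := exists_snd hk₀.2.2.1
  set D := insert u₀ C₀ with hD
  have hDmem : D ∈ H i := hc₀.2.2
  have hvD : v ∈ D := Finset.mem_insert_of_mem hvC₀
  have hvw_half : halfClause H L i v w :=
    ⟨j₀, hj₀, u₀, C₀, C₀', hc₀, hc₀', hvC₀, hwC₀'⟩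
  have hvw_mem : ((v, w) : Fin n × Fin n) ∈ Finset.univ.filter
      (fun vw : Fin n × Fin n =>
        (vw.1, (0 : Fin 2)) ∈ S ∧ (vw.2, (1 : Fin 2)) ∈ S ∧ halfClause H L i vw.1 vw.2) :=
    Finset.mem_filter.mpr ⟨Finset.mem_univ _, hvS, hwS, hvw_half⟩
  set tgt : Finset (Fin n × Finset (Fin n)) :=
    Finset.univ.filter (fun p : Fin n × Finset (Fin n) =>
      p.1 ∈ (D.erase v).erase w ∧ ∃ j, p.2 ∈ H j ∧ p.1 ∈ p.2 ∧ w ∈ p.2) with htgt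
  have hsub : F ⊆ tgt.image (fun p =>
      symmDiff S (fstCopy (D.erase p.1) ∪ sndCopy (p.2.erase p.1))) := by
    intro T hT
    rw [hF, Finset.mem_filter] at hT
    obtain ⟨-, j, hj, u, C, C', hc, hc', hB⟩ := hT
    obtain ⟨hkik, hS', hT'⟩ := hB
    obtain ⟨v', hv'C, hv'S⟩ := exists_fst hkik.2.1
    obtain ⟨w', hw'C', hw'S⟩ := exists_snd hkik.2.2.1
    have hhalf' : halfClause H L i v' w' := ⟨j, hj, u, C, C', hc, hc', hv'C, hw'C'⟩
    have hv'w'_mem : ((v', w') : Fin n × Fin n) ∈ Finset.univ.filter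
        (fun vw : Fin n × Fin n =>
          (vw.1, (0 : Fin 2)) ∈ S ∧ (vw.2, (1 : Fin 2)) ∈ S ∧ halfClause H L i vw.1 vw.2) :=
      Finset.mem_filter.mpr ⟨Finset.mem_univ _, hv'S, hw'S, hhalf'⟩
    have heq : ((v', w') : Fin n × Fin n) = (v, w) :=
      Finset.card_le_one.mp hS₀ _ hv'w'_mem _ hvw_mem
    have hv'v : v' = v := (Prod.mk.injEq _ _ _ _ ▸ heq).1
    have hw'w : w' = w := (Prod.mk.injEq _ _ _ _ ▸ heq).2
    have hvC : v ∈ C := hv'v ▸ hv'C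
    have hwC' : w ∈ C' := hw'w ▸ hw'C'
    have hDeq : insert u C = D := by
      by_contra hne
      have hdis := (hm i).2 (by exact_mod_cast hc.2.2) (by exact_mod_cast hDmem) hne
      exact (Finset.disjoint_left.mp hdis (Finset.mem_insert_of_mem hvC)) hvD
    have huv : u ≠ v := fun h => hc.2.1 (h ▸ hvC)
    have huw : u ≠ w := fun h => hc'.2.1 (h ▸ hwC')
    have huDvw : u ∈ (D.erase v).erase w :=
      Finset.mem_erase.mpr ⟨huw, Finset.mem_erase.mpr ⟨huv, hDeq ▸ Finset.mem_insert_self u C⟩⟩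
    have hCeq : D.erase u = C := by rw [← hDeq, Finset.erase_insert hc.2.1]
    have hC'eq : (insert u C').erase u = C' := Finset.erase_insert hc'.2.1
    refine Finset.mem_image.mpr ⟨(u, insert u C'), ?_, ?_⟩
    · rw [htgt, Finset.mem_filter]
      exact ⟨Finset.mem_univ _, huDvw, j, hc'.2.2, Finset.mem_insert_self _ _,
        Finset.mem_insert_of_mem hwC'⟩
    · show symmDiff S (fstCopy (D.erase u) ∪ sndCopy ((insert u C').erase u)) = T
      rw [hCeq, hC'eq, ← hkik.1, symmDiff_symmDiff_cancel_left]
  have hcard_tgt : tgt.card ≤ 2 * d := by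
    have hsub2 : tgt ⊆ ((D.erase v).erase w).biUnion (fun u =>
        ((Finset.univ : Finset (Fin k)).biUnion
          (fun j => (H j).filter (fun E => u ∈ E ∧ w ∈ E))).image (fun E => (u, E))) := by
      intro p hp
      rw [htgt, Finset.mem_filter] at hp
      obtain ⟨-, hp1, j, hj, h1, h2⟩ := hp
      rw [Finset.mem_biUnion]
      exact ⟨p.1, hp1, Finset.mem_image.mpr ⟨p.2,
        Finset.mem_biUnion.mpr ⟨j, Finset.mem_univ j, Finset.mem_filter.mpr ⟨hj, h1, h2⟩⟩, rfl⟩⟩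
    have hstep : tgt.card ≤ ∑ u ∈ (D.erase v).erase w,
        (((Finset.univ : Finset (Fin k)).biUnion
          (fun j => (H j).filter (fun E => u ∈ E ∧ w ∈ E))).image
            (fun E => ((u, E) : Fin n × Finset (Fin n)))).card :=
      le_trans (Finset.card_le_card hsub2) Finset.card_biUnion_le
    have hterm : ∀ u ∈ (D.erase v).erase w,
        (((Finset.univ : Finset (Fin k)).biUnion
          (fun j => (H j).filter (fun E => u ∈ E ∧ w ∈ E))).image
            (fun E => ((u, E) : Fin n × Finset (Fin n)))).card ≤ d := by
      intro u hu
      have hne : u ≠ w := (Finset.mem_erase.mp hu).1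
      have h1 : ∀ j, (H j).filter (fun E => u ∈ E ∧ w ∈ E)
          = (H j).filter (fun C0 => {u, w} ⊆ C0) := by
        intro j
        apply Finset.filter_congr
        intro E _
        simp [Finset.insert_subset_iff]
      calc (((Finset.univ : Finset (Fin k)).biUnion
            (fun j => (H j).filter (fun E => u ∈ E ∧ w ∈ E))).image
              (fun E => ((u, E) : Fin n × Finset (Fin n)))).card
          ≤ ((Finset.univ : Finset (Fin k)).biUnion
            (fun j => (H j).filter (fun E => u ∈ E ∧ w ∈ E))).card :=
            Finset.card_image_le
        _ ≤ ∑ j, ((H j).filter (fun E => u ∈ E ∧ w ∈ E)).card := Finset.card_biUnion_le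
        _ = ∑ j, ((H j).filter (fun C0 => {u, w} ⊆ C0)).card := by
            exact Finset.sum_congr rfl (fun j _ => by rw [h1 j])
        _ ≤ d := hd u w hne
    have hDcard : D.card = 3 := (hm i).1 D hDmem
    have hcard2 : ((D.erase v).erase w).card ≤ 2 := by
      calc ((D.erase v).erase w).card ≤ (D.erase v).card := Finset.card_erase_le
        _ = D.card - 1 := Finset.card_erase_of_mem hvD
        _ = 2 := by rw [hDcard]
    calc tgt.card ≤ ∑ u ∈ (D.erase v).erase w,
          (((Finset.univ : Finset (Fin k)).biUnion
            (fun j => (H j).filter (fun E => u ∈ E ∧ w ∈ E))).image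
              (fun E => ((u, E) : Fin n × Finset (Fin n)))).card := hstep
      _ ≤ ∑ _u ∈ (D.erase v).erase w, d := Finset.sum_le_sum hterm
      _ = ((D.erase v).erase w).card * d := by rw [Finset.sum_const, smul_eq_mul]
      _ ≤ 2 * d := Nat.mul_le_mul_right d hcard2
  calc F.card ≤ (tgt.image (fun p =>
        symmDiff S (fstCopy (D.erase p.1) ∪ sndCopy (p.2.erase p.1)))).card :=
      Finset.card_le_card hsub
    _ ≤ tgt.card := Finset.card_image_le
    _ ≤ 2 * d := hcard_tgt


/-- **Nonzero entry bound.** Under the Kikuchi setup: for every `i ∈ L`, every row of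
`B_i` has at most `2d` nonzero entries, and every column of `B_i` has at most `2d`
nonzero entries. -/
theorem kikuchi_row_column_bound :
    ∃ c c' : ℝ, 1 ≤ c ∧ 1 ≤ c' ∧
      ∀ (n k d ℓ : ℕ) (H : Fin k → Finset (Finset (Fin n))) (L : Finset (Fin k))
        (b : Fin k → Bool) (i : Fin k),
        0 < k → 0 < d → 2 ≤ ℓ →
        (∀ i', IsMatching 3 (H i')) →
        (∀ u' v' : Fin n, u' ≠ v' →
          ∑ i', ((H i').filter (fun C0 => {u', v'} ⊆ C0)).card ≤ d) →
        (k : ℝ) ≤ (n : ℝ) / c' →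
        (ℓ : ℝ) = Real.sqrt ((n : ℝ) / k) / c →
        i ∈ L →
        ∀ S : Finset (Fin n × Fin 2), S.card = ℓ →
          (Finset.univ.filter (fun T : Finset (Fin n × Fin 2) =>
            T.card = ℓ ∧ Bentry H L b i S T ≠ 0)).card ≤ 2 * d ∧
          (Finset.univ.filter (fun T : Finset (Fin n × Fin 2) =>
            T.card = ℓ ∧ Bentry H L b i T S ≠ 0)).card ≤ 2 * d := by
  refine ⟨1, 1, le_refl _, le_refl _, ?_⟩
  intro n k d ℓ H L b i hk hd2 hl hm hd hkn hln hiL S hS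
  constructor
  · refine le_trans (Finset.card_le_card ?_) (key_bound (L := L) (i := i) hm hd S)
    intro T hT
    rw [Finset.mem_filter] at hT ⊢
    exact ⟨Finset.mem_univ _, bentry_witness hT.2.2⟩
  · refine le_trans (Finset.card_le_card ?_) (key_bound (L := L) (i := i) hm hd S)
    intro T hT
    rw [Finset.mem_filter] at hT ⊢
    obtain ⟨j, hj, u, C, C', hc, hc', hB⟩ := bentry_witness hT.2.2
    obtain ⟨hkik, hT', hS'⟩ := hB
    exact ⟨Finset.mem_univ _, j, hj, u, C, C', hc, hc',
      ⟨kikRel_symm hkik, hS', hT'⟩⟩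
end
end

section
/- Let C : {-1,1}^k → {-1,1}^n be a (q, δ, ε)-normally decodable code. Then there exists a code C' : {-1,1}^k → {-1,1}^{2n} that is (q+1, δ/2, ε)-normally decodable. -/
open Finset
open scoped Classical

noncomputable section

/-- A code is `(q, δ, ε)`-normally decodable. -/
def NormallyDecodable (q k n : ℕ) (δ ε : ℝ)
    (Enc : (Fin k → Bool) → Fin n → Bool) : Prop :=
  ∃ H : Fin k → Finset (Finset (Fin n)),
    (∀ i, IsMatching q (H i)) ∧
    (∀ i, δ * n ≤ ((H i).card : ℝ)) ∧
    (∀ i, ∀ C ∈ H i,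
      (1 / 2 + ε : ℝ) ≤
        ((Finset.univ.filter (fun b : Fin k → Bool =>
          pmo (b i) = ∏ v ∈ C, pmo (Enc b v))).card : ℝ) / 2 ^ k)

/-- Every `(q, δ, ε)`-normally decodable code `C : {-1,1}^k → {-1,1}^n` yields a
`(q+1, δ/2, ε)`-normally decodable code `C' : {-1,1}^k → {-1,1}^{2n}`. -/
theorem normal_ldc_increase_query (q k n : ℕ) (δ ε : ℝ) (hδ : 0 < δ) (hε : 0 < ε)
    (Enc : (Fin k → Bool) → Fin n → Bool)
    (h : NormallyDecodable q k n δ ε Enc) :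
    ∃ Enc' : (Fin k → Bool) → Fin (2 * n) → Bool,
      NormallyDecodable (q + 1) k (2 * n) (δ / 2) ε Enc' := by
  obtain ⟨H, hM, hcard, hprob⟩ := h
  rcases Nat.eq_zero_or_pos n with hn | hn
  · subst hn
    refine ⟨fun _ _ => true, fun _ => ∅, fun i => ⟨by simp, by simp⟩, fun i => by norm_num,
      fun i C hC => absurd hC (by simp)⟩
  -- bound on matching size
  have hle : ∀ i, (H i).card ≤ n := by
    intro i
    rcases Nat.eq_zero_or_pos q with hq | hq
    · have : H i ⊆ {∅} := by
        intro C hC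
        have := (hM i).1 C hC
        simp [hq, Finset.card_eq_zero] at this
        simp [this]
      calc (H i).card ≤ ({∅} : Finset (Finset (Fin n))).card := Finset.card_le_card this
        _ = 1 := by simp
        _ ≤ n := hn
    · have h1 : ((H i).biUnion id).card = ∑ C ∈ H i, C.card := by
        apply Finset.card_biUnion
        intro x hx y hy hxy
        exact (hM i).2 hx hy hxy
      have h2 : ∑ C ∈ H i, C.card = q * (H i).card := by
        rw [Finset.sum_congr rfl fun C hC => (hM i).1 C hC]
        simp [mul_comm]
      have h3 : ((H i).biUnion id).card ≤ n := by
        have := Finset.card_le_card (Finset.subset_univ ((H i).biUnion id))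
        simpa using this
      calc (H i).card ≤ q * (H i).card := Nat.le_mul_of_pos_left _ hq
        _ ≤ n := by omega
  -- injections
  have hemb : ∀ i, Nonempty (↥(H i) ↪ Fin n) := by
    intro i
    apply Function.Embedding.nonempty_of_card_le
    simpa [Fintype.card_coe] using hle i
  let ι : ∀ i, ↥(H i) ↪ Fin n := fun i => (hemb i).some
  let emb0 : Fin n ↪ Fin (2 * n) := Fin.castLEEmb (by omega)
  let ex : ∀ i, ↥(H i) → Fin (2 * n) := fun i C => ⟨n + (ι i C : ℕ), by have := (ι i C).2; omega⟩
  let g : ∀ i, ↥(H i) → Finset (Fin (2 * n)) :=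
    fun i C => insert (ex i C) ((C : Finset (Fin n)).image emb0)
  have himg_lt : ∀ i (C : ↥(H i)) (v : Fin (2 * n)),
      v ∈ (C : Finset (Fin n)).image emb0 → (v : ℕ) < n := by
    intro i C v hv
    obtain ⟨w, _, rfl⟩ := Finset.mem_image.1 hv
    exact w.2
  have hex_notMem : ∀ i (C D : ↥(H i)), ex i C ∉ (D : Finset (Fin n)).image emb0 := by
    intro i C D hmem
    have := himg_lt i D _ hmem
    simp [ex] at this
  have hginj : ∀ i, Function.Injective (g i) := by
    intro i C1 C2 hg
    have h1 : ex i C1 ∈ g i C2 := hg ▸ Finset.mem_insert_self _ _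
    rcases Finset.mem_insert.1 h1 with h1 | h1
    · have : (ι i C1 : ℕ) = (ι i C2 : ℕ) := by
        have := congrArg (fun x : Fin (2 * n) => (x : ℕ)) h1
        simp [ex] at this
        omega
      exact (ι i).injective (Fin.ext this)
    · exact absurd h1 (hex_notMem i C1 C2)
  refine ⟨fun b v => if hv : (v : ℕ) < n then Enc b ⟨v, hv⟩ else true,
    fun i => (H i).attach.image (g i), ?_, ?_, ?_⟩
  · intro i
    constructor
    · intro D hD
      obtain ⟨C, _, rfl⟩ := Finset.mem_image.1 hD
      rw [Finset.card_insert_of_notMem (hex_notMem i C C),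
        Finset.card_image_of_injective _ emb0.injective, (hM i).1 C C.2]
    · intro D1 hD1 D2 hD2 hne
      simp only [Finset.coe_image, Set.mem_image] at hD1 hD2
      obtain ⟨C1, _, rfl⟩ := hD1
      obtain ⟨C2, _, rfl⟩ := hD2
      have hC12 : C1 ≠ C2 := fun h => hne (by rw [h])
      rw [Finset.disjoint_left]
      intro x hx1 hx2
      rcases Finset.mem_insert.1 hx1 with h1 | h1 <;>
        rcases Finset.mem_insert.1 hx2 with h2 | h2
      · have hex : ex i C1 = ex i C2 := h1 ▸ h2
        have : (ι i C1 : ℕ) = (ι i C2 : ℕ) := by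
          have := congrArg (fun x : Fin (2 * n) => (x : ℕ)) hex
          simp only [ex] at this
          omega
        exact hC12 ((ι i).injective (Fin.ext this))
      · exact hex_notMem i C1 C2 (h1 ▸ h2)
      · exact hex_notMem i C2 C1 (h2 ▸ h1)
      · obtain ⟨w1, hw1, hwx1⟩ := Finset.mem_image.1 h1
        obtain ⟨w2, hw2, hwx2⟩ := Finset.mem_image.1 h2
        have hw : w1 = w2 := emb0.injective (hwx1.trans hwx2.symm)
        have hvne : (C1 : Finset (Fin n)) ≠ (C2 : Finset (Fin n)) :=
          fun h => hC12 (Subtype.ext h)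
        exact Finset.disjoint_left.1 ((hM i).2 C1.2 C2.2 hvne) hw1 (hw ▸ hw2)
  · intro i
    rw [Finset.card_image_of_injective _ (hginj i), Finset.card_attach]
    push_cast
    calc δ / 2 * (2 * n) = δ * n := by ring
      _ ≤ _ := hcard i
  · intro i D hD
    obtain ⟨C, _, rfl⟩ := Finset.mem_image.1 hD
    have hprod : ∀ b : Fin k → Bool,
        (∏ v ∈ g i C, pmo (if hv : (v : ℕ) < n then Enc b ⟨v, hv⟩ else true))
          = ∏ v ∈ (C : Finset (Fin n)), pmo (Enc b v) := by
      intro b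
      rw [Finset.prod_insert (hex_notMem i C C), Finset.prod_image
        (fun x _ y _ hxy => emb0.injective hxy)]
      have h1 : ¬ ((ex i C : ℕ) < n) := by simp [ex]
      rw [dif_neg h1]
      simp only [pmo, if_true]
      rw [one_mul]
      apply Finset.prod_congr rfl
      intro v _
      have : ((emb0 v : Fin (2*n)) : ℕ) < n := v.2
      rw [dif_pos this]
      congr 1
    have := hprob i C C.2
    refine le_trans this ?_
    apply le_of_eq
    congr 2
    apply congrArg
    apply Finset.filter_congr
    intro b _
    simp only []
    rw [hprod b]
end
end

section
/- Under the even-q Kikuchi setup: there exists a positive integer D such that for every i ∈ [k] and every C ∈ H_i, the number of ordered pairs (S,T) of ℓ-element subsets of [n] with S ⊕ T = C and A_i(S,T) = 1 is exactly D; moreover D/N ≥ (1/2) · C(q, q/2) · e^{-3q} · (ℓ/n)^{q/2}, where C(q, q/2) is the binomial coefficient. -/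
open Finset
open scoped Classical

noncomputable section

/-- The `(S,T)` entry of the even-`q` Kikuchi matrix `A_i` is `1` iff this predicate
holds: `S ⊕ T = C` for some `C ∈ Hi`, and `|S ⊕ C'| ≠ ℓ` and `|T ⊕ C'| ≠ ℓ` for every
`C' ∈ Hi` with `C' ≠ C`. -/
def evenKikPred {n : ℕ} (Hi : Finset (Finset (Fin n))) (ℓ : ℕ)
    (S T : Finset (Fin n)) : Prop :=
  ∃ C ∈ Hi, symmDiff S T = C ∧
    ∀ C' ∈ Hi, C' ≠ C → (symmDiff S C').card ≠ ℓ ∧ (symmDiff T C').card ≠ ℓ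

namespace KikAux

open Nat

variable {α : Type*} [DecidableEq α]

lemma card_filter_irrel {α : Type*} (p : α → Prop) (h1 h2 : DecidablePred p) (s : Finset α) :
    (@Finset.filter α p h1 s).card = (@Finset.filter α p h2 s).card := by
  congr 1
  exact @Finset.filter_congr _ _ _ h1 h2 _ (fun _ _ => Iff.rfl)

lemma union_inter_of (A W B : Finset α) (hA : A ⊆ B) (hW : Disjoint W B) :
    (A ∪ W) ∩ B = A := by
  ext x
  simp only [mem_inter, mem_union]
  constructor
  · rintro ⟨hx | hx, hxB⟩
    · exact hx
    · exact absurd hxB (disjoint_left.mp hW hx)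
  · intro hx
    exact ⟨Or.inl hx, hA hx⟩

lemma union_sdiff_of (A W B : Finset α) (hA : A ⊆ B) (hW : Disjoint W B) :
    (A ∪ W) \ B = W := by
  ext x
  simp only [mem_sdiff, mem_union]
  constructor
  · rintro ⟨hx | hx, hxB⟩
    · exact absurd (hA hx) hxB
    · exact hx
  · intro hx
    exact ⟨Or.inr hx, fun h => disjoint_left.mp hW hx h⟩

lemma card_inter_add_card_sdiff (W B : Finset α) :
    (W ∩ B).card + (W \ B).card = W.card := by
  have h := card_sdiff_add_card_eq_card (inter_subset_left : W ∩ B ⊆ W)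
  rwa [sdiff_inter_self_left, add_comm] at h

lemma card_symmDiff_aux (s t : Finset α) :
    (symmDiff s t).card + 2 * (s ∩ t).card = s.card + t.card := by
  have h1 : (s ∩ t).card + (s \ t).card = s.card := card_inter_add_card_sdiff s t
  have h2 : (t ∩ s).card + (t \ s).card = t.card := card_inter_add_card_sdiff t s
  have h3 : (symmDiff s t).card = (s \ t).card + (t \ s).card := by
    rw [symmDiff_def, sup_eq_union]
    exact card_union_of_disjoint (disjoint_sdiff_sdiff)
  rw [inter_comm t s] at h2
  omega

set_option maxHeartbeats 1000000 in
/-- Key splitting lemma: count subsets of `V` of size `w` by their intersection with `B`. -/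
lemma split_card (V B : Finset α) (hBV : B ⊆ V) (w : ℕ)
    (p : ℕ → Prop) [DecidablePred p] (P : Finset α → Prop) [DecidablePred P] :
    ((V.powersetCard w).filter (fun W => p (W ∩ B).card ∧ P (W \ B))).card
      = ∑ b ∈ (Finset.range (B.card + 1)).filter (fun b => p b ∧ b ≤ w),
          B.card.choose b * (((V \ B).powersetCard (w - b)).filter P).card := by
  have step1 : ((V.powersetCard w).filter (fun W => p (W ∩ B).card ∧ P (W \ B))).card
      = ((B.powerset ×ˢ (V \ B).powerset).filter
          (fun AW => p AW.1.card ∧ AW.1.card + AW.2.card = w ∧ P AW.2)).card := by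
    apply card_nbij' (fun W => (W ∩ B, W \ B)) (fun AW => AW.1 ∪ AW.2)
    · intro W hW
      simp only [mem_coe, mem_filter, mem_powersetCard] at hW
      obtain ⟨⟨hWV, hWcard⟩, hp, hP⟩ := hW
      simp only [mem_coe, mem_filter, mem_product, mem_powerset]
      refine ⟨⟨inter_subset_right, sdiff_subset_sdiff hWV (Finset.Subset.refl B)⟩, hp, ?_, hP⟩
      rw [card_inter_add_card_sdiff, hWcard]
    · intro AW hAW
      simp only [mem_coe, mem_filter, mem_product, mem_powerset] at hAW
      obtain ⟨⟨hA, hW⟩, hp, hsum, hP⟩ := hAW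
      have hdW : Disjoint AW.2 B := (subset_sdiff.mp hW).2
      simp only [mem_coe, mem_filter, mem_powersetCard]
      refine ⟨⟨union_subset (hA.trans hBV) (hW.trans sdiff_subset), ?_⟩, ?_, ?_⟩
      · rw [card_union_of_disjoint ((hdW.mono_right hA).symm), hsum]
      · rwa [union_inter_of _ _ _ hA hdW]
      · rwa [union_sdiff_of _ _ _ hA hdW]
    · intro W _
      dsimp only; rw [union_comm]
      exact sdiff_union_inter W B
    · intro AW hAW
      simp only [mem_coe, mem_filter, mem_product, mem_powerset] at hAW
      obtain ⟨⟨hA, hW⟩, _, _, _⟩ := hAW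
      have hdW : Disjoint AW.2 B := (subset_sdiff.mp hW).2
      dsimp only; rw [union_inter_of _ _ _ hA hdW, union_sdiff_of _ _ _ hA hdW]
  rw [step1]
  have step2 : ((B.powerset ×ˢ (V \ B).powerset).filter
        (fun AW => p AW.1.card ∧ AW.1.card + AW.2.card = w ∧ P AW.2)).card
      = ∑ A ∈ B.powerset,
          (((V \ B).powerset).filter
            (fun W' => p A.card ∧ A.card + W'.card = w ∧ P W')).card := by
    rw [card_filter, Finset.sum_product]
    exact Finset.sum_congr rfl (fun A _ => (card_filter _ _).symm)
  rw [step2]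
  have step3 : ∑ A ∈ B.powerset,
        (((V \ B).powerset).filter
          (fun W' => p A.card ∧ A.card + W'.card = w ∧ P W')).card
      = ∑ b ∈ Finset.range (B.card + 1), B.card.choose b •
          (((V \ B).powerset).filter
            (fun W' => p b ∧ b + W'.card = w ∧ P W')).card :=
    Finset.sum_powerset_apply_card
      (fun b => (((V \ B).powerset).filter (fun W' => p b ∧ b + W'.card = w ∧ P W')).card)
  rw [step3, Finset.sum_filter]
  apply Finset.sum_congr rfl
  intro b _
  by_cases hb : p b ∧ b ≤ w
  · rw [if_pos hb, smul_eq_mul]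
    congr 1
    have : ((V \ B).powersetCard (w - b)).filter P
        = ((V \ B).powerset).filter (fun W' => p b ∧ b + W'.card = w ∧ P W') := by
      rw [powersetCard_eq_filter, filter_filter]
      apply filter_congr
      intro W' _
      constructor
      · rintro ⟨hc, hP⟩
        exact ⟨hb.1, by omega, hP⟩
      · rintro ⟨_, hc, hP⟩
        exact ⟨by omega, hP⟩
    rw [this]
  · rw [if_neg hb, smul_eq_mul]
    have : ((V \ B).powerset).filter (fun W' => p b ∧ b + W'.card = w ∧ P W') = ∅ := by
      rw [filter_eq_empty_iff]
      intro W' _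
      rintro ⟨hp', hc, _⟩
      exact hb ⟨hp', by omega⟩
    rw [this, card_empty, mul_zero]

/-- Count of `w`-subsets of `V` meeting `B` in exactly `σ` elements. -/
lemma bad_card (V B : Finset α) (hBV : B ⊆ V) (w σ : ℕ) (hσw : σ ≤ w) (hσB : σ ≤ B.card) :
    ((V.powersetCard w).filter (fun W => (W ∩ B).card = σ)).card
      = B.card.choose σ * ((V \ B).card.choose (w - σ)) := by
  have h := split_card V B hBV w (fun b => b = σ) (fun _ => True)
  simp only [and_true] at h
  rw [h]
  rw [Finset.sum_eq_single_of_mem σ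
    (Finset.mem_filter.mpr ⟨Finset.mem_range.mpr (by omega), rfl, hσw⟩)
    (fun b hb hne => absurd (mem_filter.mp hb).2.1 hne)]
  rw [filter_true_of_mem (fun _ _ => trivial), card_powersetCard]

/-- The recursively defined count. -/
def kikF (q σ : ℕ) : ℕ → ℕ → ℕ → ℕ
  | v, 0, w => v.choose w
  | v, (j+1), w =>
      ∑ b ∈ (Finset.range (q + 1)).filter (fun b => b ≠ σ ∧ b ≤ w),
        q.choose b * kikF q σ (v - q) j (w - b)

lemma g_eq (q σ : ℕ) (F : Finset (Finset α)) :
    ∀ (V : Finset α) (w : ℕ),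
    (∀ B ∈ F, B.card = q) → (∀ B ∈ F, B ⊆ V) →
    ((F : Set (Finset α)).Pairwise Disjoint) →
    ((V.powersetCard w).filter (fun W => ∀ B ∈ F, (W ∩ B).card ≠ σ)).card
      = kikF q σ V.card F.card w := by
  induction F using Finset.induction_on with
  | empty =>
      intro V w _ _ _
      simp only [notMem_empty, false_implies, implies_true, filter_true_of_mem,
        card_powersetCard, card_empty]
      rfl
  | @insert B F hBF ih =>
      intro V w hcard hsub hdisj
      have hBq : B.card = q := hcard B (mem_insert_self B F)
      have hBV : B ⊆ V := hsub B (mem_insert_self B F)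
      have hFdisjB : ∀ B' ∈ F, Disjoint B B' := by
        intro B' hB'
        refine hdisj (by simp) (by simp [hB']) ?_
        rintro rfl
        exact hBF hB'
      have hinterW : ∀ (W : Finset α), ∀ B' ∈ F, (W \ B) ∩ B' = W ∩ B' := by
        intro W B' hB'
        ext a
        simp only [mem_inter, mem_sdiff]
        have hd := disjoint_left.mp (hFdisjB B' hB')
        constructor
        · rintro ⟨⟨ha, _⟩, ha'⟩; exact ⟨ha, ha'⟩
        · rintro ⟨ha, ha'⟩; exact ⟨⟨ha, fun hB => hd hB ha'⟩, ha'⟩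
      have hfc : (V.powersetCard w).filter (fun W => ∀ B' ∈ insert B F, (W ∩ B').card ≠ σ)
          = (V.powersetCard w).filter
              (fun W => (W ∩ B).card ≠ σ ∧ ∀ B' ∈ F, ((W \ B) ∩ B').card ≠ σ) := by
        apply filter_congr
        intro W _
        simp only [mem_insert, forall_eq_or_imp]
        constructor
        · rintro ⟨h1, h2⟩
          exact ⟨h1, fun B' hB' => by rw [hinterW W B' hB']; exact h2 B' hB'⟩
        · rintro ⟨h1, h2⟩
          exact ⟨h1, fun B' hB' => by rw [← hinterW W B' hB']; exact h2 B' hB'⟩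
      rw [hfc, split_card V B hBV w (fun b => b ≠ σ) (fun W' => ∀ B' ∈ F, (W' ∩ B').card ≠ σ),
        hBq, card_insert_of_notMem hBF]
      show _ = kikF q σ V.card (F.card + 1) w
      simp only [kikF]
      apply Finset.sum_congr rfl
      intro b _
      congr 1
      rw [ih (V \ B) (w - b) (fun B' hB' => hcard B' (mem_insert_of_mem hB'))
        (fun B' hB' => subset_sdiff.mpr
          ⟨hsub B' (mem_insert_of_mem hB'), (hFdisjB B' hB').symm⟩)
        (hdisj.mono (by exact_mod_cast subset_insert B F)),
        card_sdiff_of_subset hBV, hBq]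

lemma choose_le_four_pow (q σ : ℕ) (h : q = σ + σ) : q.choose σ ≤ 4 ^ σ := by
  have h1 : q.choose σ ≤ ∑ i ∈ Finset.range (q + 1), q.choose i :=
    Finset.single_le_sum (fun i _ => Nat.zero_le _) (by simp; omega)
  have h2 : ∑ i ∈ Finset.range (q + 1), q.choose i = 2 ^ q := Nat.sum_range_choose q
  have h3 : (2:ℕ) ^ q = 4 ^ σ := by
    subst h
    rw [pow_add, ← mul_pow]
    norm_num
  exact (h1.trans_eq h2).trans_eq h3

lemma choose_desc_identity (n ℓ σ : ℕ) (h1 : σ ≤ ℓ) (h2 : ℓ + σ ≤ n) :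
    n.choose ℓ * (ℓ.descFactorial σ * (n - ℓ).descFactorial σ)
      = (n - (σ + σ)).choose (ℓ - σ) * n.descFactorial (σ + σ) := by
  set q := σ + σ with hq
  have hqn : q ≤ n := by omega
  have hen : ℓ - σ ≤ n - q := by omega
  have h3 : σ ≤ n - ℓ := by omega
  have key1 : (ℓ - σ)! * ℓ.descFactorial σ = ℓ ! := Nat.factorial_mul_descFactorial h1
  have key2 : (n - ℓ - σ)! * (n - ℓ).descFactorial σ = (n - ℓ)! :=
    Nat.factorial_mul_descFactorial h3
  have key3 : (n - q)! * n.descFactorial q = n ! := Nat.factorial_mul_descFactorial hqn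
  have key4 : n.choose ℓ * ℓ ! * (n - ℓ)! = n ! :=
    Nat.choose_mul_factorial_mul_factorial (by omega)
  have key5 : (n - q).choose (ℓ - σ) * (ℓ - σ)! * (n - q - (ℓ - σ))! = (n - q)! :=
    Nat.choose_mul_factorial_mul_factorial hen
  have harg : n - q - (ℓ - σ) = n - ℓ - σ := by omega
  rw [harg] at key5
  apply Nat.eq_of_mul_eq_mul_right
    (show 0 < (ℓ - σ)! * ((n - ℓ - σ)! * (n - q)!) from
      Nat.mul_pos (Nat.factorial_pos _) (Nat.mul_pos (Nat.factorial_pos _) (Nat.factorial_pos _)))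
  calc n.choose ℓ * (ℓ.descFactorial σ * (n - ℓ).descFactorial σ)
        * ((ℓ - σ)! * ((n - ℓ - σ)! * (n - q)!))
      = n.choose ℓ * ((ℓ - σ)! * ℓ.descFactorial σ)
          * ((n - ℓ - σ)! * (n - ℓ).descFactorial σ) * (n - q)! := by ring
    _ = n.choose ℓ * ℓ ! * (n - ℓ)! * (n - q)! := by rw [key1, key2]
    _ = n ! * (n - q)! := by rw [key4]
    _ = ((n - q).choose (ℓ - σ) * (ℓ - σ)! * (n - ℓ - σ)!) * ((n - q)! * n.descFactorial q) := by
        rw [key5, key3]; ring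
    _ = (n - q).choose (ℓ - σ) * n.descFactorial q * ((ℓ - σ)! * ((n - ℓ - σ)! * (n - q)!)) := by
        ring




set_option maxHeartbeats 1000000 in
lemma pairs_card {n : ℕ} (q σ ℓ : ℕ) (hσq : q = σ + σ) (hσℓ : σ ≤ ℓ)
    (Hi : Finset (Finset (Fin n))) (hcards : ∀ C ∈ Hi, C.card = q)
    (hdisj : Set.Pairwise (Hi : Set (Finset (Fin n))) Disjoint)
    (C : Finset (Fin n)) (hC : C ∈ Hi) :
    (Finset.univ.filter
      (fun ST : Finset (Fin n) × Finset (Fin n) =>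
        ST.1.card = ℓ ∧ ST.2.card = ℓ ∧ symmDiff ST.1 ST.2 = C ∧
        evenKikPred Hi ℓ ST.1 ST.2)).card
    = q.choose σ *
      (((Finset.univ \ C).powersetCard (ℓ - σ)).filter
        (fun W => ∀ B ∈ Hi.erase C, (W ∩ B).card ≠ σ)).card := by
  have hCq : C.card = q := hcards C hC
  rw [← hCq, ← card_powersetCard σ C, ← card_product]
  -- facts about members of the LHS filter
  have main : ∀ ST : Finset (Fin n) × Finset (Fin n),
      (ST.1.card = ℓ ∧ ST.2.card = ℓ ∧ symmDiff ST.1 ST.2 = C ∧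
        evenKikPred Hi ℓ ST.1 ST.2) →
      (ST.1 ∩ C).card = σ ∧ ST.1 \ C = ST.2 \ C := by
    rintro ⟨S, T⟩ ⟨hS, hT, hΔ, _⟩
    dsimp only at hS hT hΔ ⊢
    have hmem : ∀ x, (x ∈ S ∧ x ∉ T ∨ x ∈ T ∧ x ∉ S) ↔ x ∈ C := by
      intro x
      rw [← hΔ, Finset.mem_symmDiff]
    have hsd : S \ C = T \ C := by
      ext x
      have := hmem x
      simp only [mem_sdiff]
      tauto
    have hcu : (S ∩ C) ∪ (T ∩ C) = C := by
      ext x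
      have := hmem x
      simp only [mem_union, mem_inter]
      tauto
    have hcd : Disjoint (S ∩ C) (T ∩ C) := by
      rw [disjoint_left]
      intro x hx hx'
      have := hmem x
      simp only [mem_inter] at hx hx'
      tauto
    have hq' : (S ∩ C).card + (T ∩ C).card = q := by
      rw [← card_union_of_disjoint hcd, hcu, hCq]
    have h1 : (S ∩ C).card + (S \ C).card = ℓ := by
      rw [card_inter_add_card_sdiff, hS]
    have h2 : (T ∩ C).card + (T \ C).card = ℓ := by
      rw [card_inter_add_card_sdiff, hT]
    have h3 : (S \ C).card = (T \ C).card := by rw [hsd]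
    exact ⟨by omega, hsd⟩
  apply card_nbij' (fun ST => (ST.1 ∩ C, ST.1 \ C))
    (fun AW => (AW.1 ∪ AW.2, (C \ AW.1) ∪ AW.2))
  · -- forward membership
    rintro ⟨S, T⟩ hST
    rw [mem_coe, mem_filter] at hST
    obtain ⟨-, hS, hT, hΔ, hpred⟩ := hST
    dsimp only at hpred
    obtain ⟨hσcard, hsd⟩ := main (S, T) ⟨hS, hT, hΔ, hpred⟩
    dsimp only at hσcard hsd hS hT hΔ
    simp only [mem_coe, mem_product, mem_powersetCard, mem_filter]
    refine ⟨⟨inter_subset_right, hσcard⟩, ⟨?_, ?_⟩, ?_⟩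
    · intro x hx
      simp only [mem_sdiff] at hx ⊢
      exact ⟨mem_univ x, hx.2⟩
    · have := card_inter_add_card_sdiff S C
      omega
    · -- the goodness condition
      intro B hB
      rw [mem_erase] at hB
      obtain ⟨hBne, hBH⟩ := hB
      obtain ⟨C'', hC''H, hC''eq, hcond⟩ := hpred
      have hCC'' : C'' = C := by rw [← hΔ, hC''eq]
      have hSB := (hcond B hBH (by rw [hCC'']; exact hBne)).1
      have hdisjCB : Disjoint C B := hdisj hC hBH (Ne.symm hBne)
      have heq : (S \ C) ∩ B = S ∩ B := by
        ext x
        simp only [mem_inter, mem_sdiff]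
        have := disjoint_left.mp hdisjCB
        constructor
        · rintro ⟨⟨h, _⟩, h'⟩; exact ⟨h, h'⟩
        · rintro ⟨h, h'⟩; exact ⟨⟨h, fun hc => this hc h'⟩, h'⟩
      rw [heq]
      intro hcon
      apply hSB
      have hBq : B.card = q := hcards B hBH
      have := card_symmDiff_aux S B
      omega
  · -- backward membership
    rintro ⟨A, W⟩ hAW
    dsimp only
    simp only [mem_coe, mem_product, mem_powersetCard, mem_filter] at hAW
    obtain ⟨⟨hAC, hAcard⟩, ⟨⟨hWu, hWcard⟩, hWgood⟩⟩ := hAW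
    have hWC : Disjoint W C := (subset_sdiff.mp hWu).2
    have hAW' : Disjoint A W := (hWC.mono_right hAC).symm
    have hCAW : Disjoint (C \ A) W := hWC.symm.mono_left sdiff_subset
    have hCAcard : (C \ A).card = σ := by
      rw [card_sdiff_of_subset hAC, hCq, hAcard]; omega
    have hScard : (A ∪ W).card = ℓ := by
      rw [card_union_of_disjoint hAW', hAcard, hWcard]; omega
    have hTcard : ((C \ A) ∪ W).card = ℓ := by
      rw [card_union_of_disjoint hCAW, hCAcard, hWcard]; omega
    have hΔ : symmDiff (A ∪ W) ((C \ A) ∪ W) = C := by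
      ext x
      simp only [Finset.mem_symmDiff, mem_union, mem_sdiff]
      have hxA : x ∈ A → x ∈ C := fun h => hAC h
      have hxW : x ∈ W → x ∉ C := fun h hc => disjoint_left.mp hWC h hc
      tauto
    rw [mem_coe, mem_filter]
    refine ⟨mem_univ _, hScard, hTcard, hΔ, C, hC, hΔ, ?_⟩
    intro C' hC' hne
    have hdisjCC' : Disjoint C C' := hdisj hC hC' (Ne.symm hne)
    have hWgoodC' : (W ∩ C').card ≠ σ :=
      hWgood C' (mem_erase.mpr ⟨hne, hC'⟩)
    have hC'q : C'.card = q := hcards C' hC'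
    have hSint : (A ∪ W) ∩ C' = W ∩ C' := by
      ext x
      simp only [mem_inter, mem_union]
      have h1 : x ∈ A → x ∉ C' := fun h hc => disjoint_left.mp hdisjCC' (hAC h) hc
      tauto
    have hTint : ((C \ A) ∪ W) ∩ C' = W ∩ C' := by
      ext x
      simp only [mem_inter, mem_union, mem_sdiff]
      have h1 : x ∈ C → x ∉ C' := fun h hc => disjoint_left.mp hdisjCC' h hc
      tauto
    constructor
    · intro hcon
      apply hWgoodC'
      have h5 := card_symmDiff_aux (A ∪ W) C'
      rw [hSint, hcon, hScard, hC'q] at h5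
      omega
    · intro hcon
      apply hWgoodC'
      have h5 := card_symmDiff_aux ((C \ A) ∪ W) C'
      rw [hTint, hcon, hTcard, hC'q] at h5
      omega
  · -- left inverse
    rintro ⟨S, T⟩ hST
    rw [mem_coe, mem_filter] at hST
    obtain ⟨-, hS, hT, hΔ, hpred⟩ := hST
    have hmem : ∀ x, (x ∈ S ∧ x ∉ T ∨ x ∈ T ∧ x ∉ S) ↔ x ∈ C := by
      intro x
      rw [← hΔ, Finset.mem_symmDiff]
    have h1 : (S ∩ C) ∪ (S \ C) = S := by
      rw [union_comm]; exact sdiff_union_inter S C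
    have h2 : (C \ (S ∩ C)) ∪ (S \ C) = T := by
      ext x
      have := hmem x
      simp only [mem_union, mem_sdiff, mem_inter]
      tauto
    simp only [Prod.mk.injEq]
    exact ⟨h1, h2⟩
  · -- right inverse
    rintro ⟨A, W⟩ hAW
    simp only [mem_coe, mem_product, mem_powersetCard, mem_filter] at hAW
    obtain ⟨⟨hAC, hAcard⟩, ⟨⟨hWu, hWcard⟩, hWgood⟩⟩ := hAW
    have hWC : Disjoint W C := (subset_sdiff.mp hWu).2
    have h1 : (A ∪ W) ∩ C = A := union_inter_of A W C hAC hWC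
    have h2 : (A ∪ W) \ C = W := union_sdiff_of A W C hAC hWC
    simp only [Prod.mk.injEq]
    exact ⟨h1, h2⟩


set_option maxHeartbeats 2000000 in
/-- The analytic core: positivity and the lower bound on `M / N`. -/
lemma kik_analytic (q σ ℓ n j M : ℕ) (c : ℝ)
    (hq : 4 ≤ q) (hqσ : q = σ + σ)
    (hc : Real.exp 16 ≤ c)
    (hℓ : (ℓ : ℝ) = (n : ℝ) ^ (1 - 2 / (q : ℝ)) / c)
    (hℓq : q ≤ ℓ) (hℓn : 2 * ℓ ≤ n)
    (hjq : (j : ℝ) * q ≤ n)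
    (hM : (n - q).choose (ℓ - σ) ≤ M + j * (q.choose σ * ((n - q - q).choose (ℓ - σ - σ)))) :
    0 < M ∧
      (1 / 2 : ℝ) * (q.choose σ : ℝ) * Real.exp (-(3 * q)) * ((ℓ : ℝ) / n) ^ σ
        ≤ ((q.choose σ : ℝ) * M) / (n.choose ℓ : ℝ) := by
  have hσ2 : 2 ≤ σ := by omega
  have hn8 : 8 ≤ n := by omega
  have hnr0 : (0 : ℝ) < n := by positivity
  have hlr0 : (0 : ℝ) < ℓ := by exact_mod_cast (by omega : 0 < ℓ)
  have hcpos : (0 : ℝ) < c := lt_of_lt_of_le (Real.exp_pos 16) hc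
  have hc17 : (17 : ℝ) ≤ c := by
    have := Real.add_one_le_exp (16 : ℝ)
    linarith
  have hq2σ : (q : ℝ) = 2 * σ := by
    rw [hqσ]; push_cast; ring
  have hσr0 : (0 : ℝ) < σ := by exact_mod_cast (by omega : 0 < σ)
  have hqr0 : (0 : ℝ) < q := by exact_mod_cast (by omega : 0 < q)
  -- the key identity (ℓ c)^σ = n^σ / n
  have hlc : (ℓ : ℝ) * c = (n : ℝ) ^ ((1 : ℝ) - 2 / q) := by
    rw [hℓ]; field_simp
  have hexp : ((1 : ℝ) - 2 / q) * σ = (σ : ℝ) - 1 := by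
    rw [hq2σ]; field_simp
  have hkey0 : ((ℓ : ℝ) * c) ^ σ = (n : ℝ) ^ σ / n := by
    rw [hlc, ← Real.rpow_natCast ((n : ℝ) ^ ((1 : ℝ) - 2 / q)) σ,
      ← Real.rpow_mul hnr0.le, hexp, Real.rpow_sub hnr0, Real.rpow_natCast, Real.rpow_one]
  have hkey : (ℓ : ℝ) ^ σ * c ^ σ * n = (n : ℝ) ^ σ := by
    rw [mul_pow] at hkey0
    rw [hkey0]
    field_simp
  -- n is large : q * 17 ≤ n
  have hn17q : (q : ℝ) * 17 ≤ n := by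
    have h1 : (ℓ : ℝ) * c ≤ n := by
      rw [hlc]
      calc (n : ℝ) ^ ((1 : ℝ) - 2 / q) ≤ (n : ℝ) ^ (1 : ℝ) :=
            Real.rpow_le_rpow_of_exponent_le (by exact_mod_cast (by omega : 1 ≤ n))
              (by nlinarith [div_nonneg (by norm_num : (0:ℝ) ≤ 2) hqr0.le])
        _ = n := Real.rpow_one _
    have h2 : (q : ℝ) * 17 ≤ (ℓ : ℝ) * c := by
      have : (q : ℝ) ≤ ℓ := by exact_mod_cast hℓq
      nlinarith
    linarith
  have hn4q : 4 * q ≤ n := by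
    have : (4 * q : ℝ) ≤ n := by nlinarith
    exact_mod_cast this
  -- basic nat inequalities
  have hℓn' : ℓ ≤ n := by omega
  have hℓσn : ℓ - σ ≤ n - q := by omega
  have hNpos : 0 < n.choose ℓ := Nat.choose_pos hℓn'
  have hApos : 0 < (n - q).choose (ℓ - σ) := Nat.choose_pos hℓσn
  have hNr : (0 : ℝ) < (n.choose ℓ : ℝ) := by exact_mod_cast hNpos
  have hAr : (0 : ℝ) < ((n - q).choose (ℓ - σ) : ℝ) := by exact_mod_cast hApos
  have hcq0 : 0 < q.choose σ := Nat.choose_pos (by omega)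
  have hcqr : (0 : ℝ) < (q.choose σ : ℝ) := by exact_mod_cast hcq0
  -- casts of descFactorials
  have hd3pos : (0 : ℝ) < (n.descFactorial q : ℝ) := by
    have h2 : 0 < (n + 1 - q) ^ q := Nat.pow_pos (by omega)
    have h := Nat.pow_sub_le_descFactorial n q
    exact_mod_cast lt_of_lt_of_le h2 h
  -- exp(-3q) ≤ (1/8)^σ
  have he8 : Real.exp (-(3 * q)) ≤ (1 / 8 : ℝ) ^ σ := by
    have harg : (-(3 * (q : ℝ))) = (σ : ℕ) * (-6 : ℝ) := by rw [hq2σ]; push_cast; ring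
    rw [harg, Real.exp_nat_mul]
    apply pow_le_pow_left₀ (Real.exp_pos _).le _ σ
    have h3 : (4 : ℝ) ≤ Real.exp 3 := by
      have := Real.add_one_le_exp (3 : ℝ); linarith
    have h6 : (8 : ℝ) ≤ Real.exp 6 := by
      have he : Real.exp 6 = Real.exp 3 * Real.exp 3 := by
        rw [← Real.exp_add]; norm_num
      nlinarith
    rw [Real.exp_neg]
    rw [show (1 / 8 : ℝ) = 8⁻¹ by norm_num]
    exact inv_anti₀ (by norm_num) h6
  -- E2 : exp(-3q) (ℓ/n)^σ N ≤ A
  have hE2 : Real.exp (-(3 * q)) * ((ℓ : ℝ) / n) ^ σ * (n.choose ℓ : ℝ)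
      ≤ ((n - q).choose (ℓ - σ) : ℝ) := by
    have hid : (n.choose ℓ : ℝ) * ((ℓ.descFactorial σ : ℝ) * ((n - ℓ).descFactorial σ : ℝ))
        = ((n - q).choose (ℓ - σ) : ℝ) * (n.descFactorial q : ℝ) := by
      have h := choose_desc_identity n ℓ σ (by omega) (by omega)
      rw [← hqσ] at h
      exact_mod_cast h
    have hub3 : (n.descFactorial q : ℝ) ≤ (n : ℝ) ^ q := by
      exact_mod_cast Nat.descFactorial_le_pow n q
    have hb1 : ((ℓ : ℝ) / 2) ^ σ ≤ (ℓ.descFactorial σ : ℝ) := by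
      have h := Nat.pow_sub_le_descFactorial ℓ σ
      have h' : (((ℓ + 1 - σ : ℕ) : ℝ)) ^ σ ≤ (ℓ.descFactorial σ : ℝ) := by
        exact_mod_cast h
      refine le_trans (pow_le_pow_left₀ (by positivity) ?_ σ) h'
      have hcs : ((ℓ + 1 - σ : ℕ) : ℝ) = (ℓ : ℝ) + 1 - σ := by
        rw [Nat.cast_sub (by omega)]; push_cast; ring
      rw [hcs]
      have h2σ : ((σ : ℝ)) + σ ≤ (ℓ : ℝ) := by exact_mod_cast (by omega : σ + σ ≤ ℓ)
      linarith
    have hb2 : ((n : ℝ) / 4) ^ σ ≤ ((n - ℓ).descFactorial σ : ℝ) := by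
      have h := Nat.pow_sub_le_descFactorial (n - ℓ) σ
      have h' : (((n - ℓ + 1 - σ : ℕ) : ℝ)) ^ σ ≤ ((n - ℓ).descFactorial σ : ℝ) := by
        exact_mod_cast h
      refine le_trans (pow_le_pow_left₀ (by positivity) ?_ σ) h'
      have hcs : ((n - ℓ + 1 - σ : ℕ) : ℝ) = (n : ℝ) - ℓ + 1 - σ := by
        rw [Nat.cast_sub (by omega), Nat.cast_add, Nat.cast_sub (by omega)]; push_cast; ring
      rw [hcs]
      have h2ℓ : 2 * (ℓ : ℝ) ≤ (n : ℝ) := by exact_mod_cast hℓn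
      have h8σ : 8 * (σ : ℝ) ≤ (n : ℝ) := by
        exact_mod_cast (by omega : 8 * σ ≤ n)
      linarith
    rw [← mul_le_mul_iff_of_pos_right hd3pos]
    calc Real.exp (-(3 * q)) * ((ℓ : ℝ) / n) ^ σ * (n.choose ℓ : ℝ) * (n.descFactorial q : ℝ)
        = (n.choose ℓ : ℝ) * (Real.exp (-(3 * q)) * (((ℓ : ℝ) / n) ^ σ * (n.descFactorial q : ℝ))) := by
          ring
      _ ≤ (n.choose ℓ : ℝ) * ((ℓ.descFactorial σ : ℝ) * ((n - ℓ).descFactorial σ : ℝ)) := by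
          apply mul_le_mul_of_nonneg_left _ hNr.le
          calc Real.exp (-(3 * q)) * (((ℓ : ℝ) / n) ^ σ * (n.descFactorial q : ℝ))
              ≤ (1 / 8 : ℝ) ^ σ * (((ℓ : ℝ) / n) ^ σ * (n : ℝ) ^ q) := by
                apply mul_le_mul he8 _ (by positivity) (by positivity)
                apply mul_le_mul_of_nonneg_left hub3 (by positivity)
            _ = ((ℓ : ℝ) / 2) ^ σ * ((n : ℝ) / 4) ^ σ := by
                rw [hqσ, pow_add, div_pow, div_pow, div_pow]
                have h8 : (8 : ℝ) ^ σ = 2 ^ σ * 4 ^ σ := by rw [← mul_pow]; norm_num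
                field_simp
                rw [h8]
                have h14 : (1 / 4 : ℝ) ^ σ * 4 ^ σ = 1 := by rw [← mul_pow]; norm_num
                linear_combination (-(n : ℝ) ^ σ * 2 ^ σ) * h14
            _ ≤ (ℓ.descFactorial σ : ℝ) * ((n - ℓ).descFactorial σ : ℝ) := by
                apply mul_le_mul hb1 hb2 (by positivity)
                exact le_trans (by positivity) hb1
      _ = ((n - q).choose (ℓ - σ) : ℝ) * (n.descFactorial q : ℝ) := hid
  -- E1 : the union bound term is at most half of A
  have hd3'pos : (0 : ℝ) < ((n - q).descFactorial (σ + σ) : ℝ) := by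
    have h2 : 0 < (n - q + 1 - (σ + σ)) ^ (σ + σ) := Nat.pow_pos (by omega)
    have h := Nat.pow_sub_le_descFactorial (n - q) (σ + σ)
    exact_mod_cast lt_of_lt_of_le h2 h
  have hE1 : (j : ℝ) * (q.choose σ : ℝ) * ((n - q - q).choose (ℓ - σ - σ) : ℝ)
      ≤ (1 / 2 : ℝ) * ((n - q).choose (ℓ - σ) : ℝ) := by
    have hid' : ((n - q).choose (ℓ - σ) : ℝ)
          * (((ℓ - σ).descFactorial σ : ℝ) * ((n - q - (ℓ - σ)).descFactorial σ : ℝ))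
        = ((n - q - q).choose (ℓ - σ - σ) : ℝ) * ((n - q).descFactorial (σ + σ) : ℝ) := by
      have h := choose_desc_identity (n - q) (ℓ - σ) σ (by omega) (by omega)
      rw [show n - q - (σ + σ) = n - q - q by omega] at h
      exact_mod_cast h
    have hcq4 : (q.choose σ : ℝ) ≤ (4 : ℝ) ^ σ := by
      exact_mod_cast choose_le_four_pow q σ hqσ
    have hjnq : (j : ℝ) ≤ (n : ℝ) / q := by
      rw [le_div_iff₀ hqr0]; exact hjq
    have hb1' : ((ℓ - σ).descFactorial σ : ℝ) ≤ (ℓ : ℝ) ^ σ := by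
      calc ((ℓ - σ).descFactorial σ : ℝ) ≤ (((ℓ - σ : ℕ) : ℝ)) ^ σ := by
            exact_mod_cast Nat.descFactorial_le_pow (ℓ - σ) σ
        _ ≤ (ℓ : ℝ) ^ σ := by
            apply pow_le_pow_left₀ (by positivity)
            exact_mod_cast Nat.sub_le ℓ σ
    have hb2' : ((n - q - (ℓ - σ)).descFactorial σ : ℝ) ≤ (n : ℝ) ^ σ := by
      calc ((n - q - (ℓ - σ)).descFactorial σ : ℝ) ≤ (((n - q - (ℓ - σ) : ℕ) : ℝ)) ^ σ := by
            exact_mod_cast Nat.descFactorial_le_pow _ σ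
        _ ≤ (n : ℝ) ^ σ := by
            apply pow_le_pow_left₀ (by positivity)
            exact_mod_cast (by omega : n - q - (ℓ - σ) ≤ n)
    have hb3' : ((n : ℝ) / 2) ^ (σ + σ) ≤ ((n - q).descFactorial (σ + σ) : ℝ) := by
      have h := Nat.pow_sub_le_descFactorial (n - q) (σ + σ)
      have h' : (((n - q + 1 - (σ + σ) : ℕ) : ℝ)) ^ (σ + σ)
          ≤ ((n - q).descFactorial (σ + σ) : ℝ) := by exact_mod_cast h
      refine le_trans (pow_le_pow_left₀ (by positivity) ?_ _) h'
      have hcs : ((n - q + 1 - (σ + σ) : ℕ) : ℝ) = (n : ℝ) - q + 1 - (σ + σ) := by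
        rw [Nat.cast_sub (by omega), Nat.cast_add, Nat.cast_sub (by omega)]; push_cast; ring
      rw [hcs]
      have h4q : 4 * (q : ℝ) ≤ (n : ℝ) := by exact_mod_cast hn4q
      have hqs : (q : ℝ) = (σ : ℝ) + σ := by exact_mod_cast hqσ
      linarith
    rw [← mul_le_mul_iff_of_pos_right hd3'pos]
    have h2pow : (2 : ℝ) ^ (σ + σ) = 4 ^ σ := by rw [pow_add, ← mul_pow]; norm_num
    have h4σpos : (0 : ℝ) < (4 : ℝ) ^ σ := by positivity
    have hRHS : ((n : ℝ) / 2) ^ (σ + σ) = (n : ℝ) ^ σ * ((ℓ : ℝ) ^ σ * c ^ σ * n) / (4 : ℝ) ^ σ := by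
      rw [div_pow, h2pow, pow_add, hkey]
    have hc16' : (4 : ℝ) ^ σ * (4 : ℝ) ^ σ ≤ c ^ σ := by
      have h16 : (16 : ℝ) ^ σ = 4 ^ σ * 4 ^ σ := by rw [← mul_pow]; norm_num
      rw [← h16]
      exact pow_le_pow_left₀ (by norm_num) (by linarith) σ
    calc (j : ℝ) * (q.choose σ : ℝ) * ((n - q - q).choose (ℓ - σ - σ) : ℝ)
          * ((n - q).descFactorial (σ + σ) : ℝ)
        = (j : ℝ) * (q.choose σ : ℝ)
            * (((n - q - q).choose (ℓ - σ - σ) : ℝ) * ((n - q).descFactorial (σ + σ) : ℝ)) := by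
          ring
      _ = (j : ℝ) * (q.choose σ : ℝ)
            * (((n - q).choose (ℓ - σ) : ℝ)
              * (((ℓ - σ).descFactorial σ : ℝ) * ((n - q - (ℓ - σ)).descFactorial σ : ℝ))) := by
          rw [← hid']
      _ = ((n - q).choose (ℓ - σ) : ℝ)
            * ((j : ℝ) * (q.choose σ : ℝ)
              * (((ℓ - σ).descFactorial σ : ℝ) * ((n - q - (ℓ - σ)).descFactorial σ : ℝ))) := by
          ring
      _ ≤ ((n - q).choose (ℓ - σ) : ℝ)
            * ((1 / 2 : ℝ) * ((n - q).descFactorial (σ + σ) : ℝ)) := by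
          apply mul_le_mul_of_nonneg_left _ hAr.le
          calc (j : ℝ) * (q.choose σ : ℝ)
                * (((ℓ - σ).descFactorial σ : ℝ) * ((n - q - (ℓ - σ)).descFactorial σ : ℝ))
              ≤ ((n : ℝ) / q) * (4 : ℝ) ^ σ * ((ℓ : ℝ) ^ σ * (n : ℝ) ^ σ) := by
                apply mul_le_mul (mul_le_mul hjnq hcq4 (by positivity) (by positivity))
                  (mul_le_mul hb1' hb2' (by positivity) (by positivity))
                  (by positivity) (by positivity)
            _ ≤ ((n : ℝ) / 4) * (4 : ℝ) ^ σ * ((ℓ : ℝ) ^ σ * (n : ℝ) ^ σ) := by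
                have hq4 : (4 : ℝ) ≤ (q : ℝ) := by exact_mod_cast hq
                have := div_le_div_of_nonneg_left hnr0.le (show (0:ℝ) < 4 by norm_num) hq4
                apply mul_le_mul_of_nonneg_right
                  (mul_le_mul_of_nonneg_right this (by positivity)) (by positivity)
            _ ≤ (1 / 2 : ℝ) * ((n : ℝ) / 2) ^ (σ + σ) := by
                rw [hRHS]
                rw [show (1 / 2 : ℝ) * ((n : ℝ) ^ σ * ((ℓ : ℝ) ^ σ * c ^ σ * n) / (4 : ℝ) ^ σ)
                    = ((1 / 2 : ℝ) * ((n : ℝ) ^ σ * ((ℓ : ℝ) ^ σ * n)) * c ^ σ) / (4 : ℝ) ^ σ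
                    from by ring]
                rw [le_div_iff₀ h4σpos]
                have hX : (0 : ℝ) ≤ (1 / 2 : ℝ) * ((n : ℝ) ^ σ * ((ℓ : ℝ) ^ σ * n)) := by
                  positivity
                have hkey2 := mul_le_mul_of_nonneg_left hc16' hX
                nlinarith [pow_pos (show (0:ℝ) < 4 by norm_num) σ,
                  pow_pos hlr0 σ, pow_pos hnr0 σ]
            _ ≤ (1 / 2 : ℝ) * ((n - q).descFactorial (σ + σ) : ℝ) := by
                apply mul_le_mul_of_nonneg_left hb3' (by norm_num)
      _ = (1 / 2 : ℝ) * ((n - q).choose (ℓ - σ) : ℝ) * ((n - q).descFactorial (σ + σ) : ℝ) := by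
          ring
  -- combine
  have hMr : ((n - q).choose (ℓ - σ) : ℝ)
      ≤ (M : ℝ) + (j : ℝ) * ((q.choose σ : ℝ) * ((n - q - q).choose (ℓ - σ - σ) : ℝ)) := by
    exact_mod_cast hM
  have hMhalf : (1 / 2 : ℝ) * ((n - q).choose (ℓ - σ) : ℝ) ≤ (M : ℝ) := by
    nlinarith [hE1, hMr]
  have hMpos : 0 < M := by
    have h0 : (0 : ℝ) < (M : ℝ) := lt_of_lt_of_le (by positivity) hMhalf
    exact_mod_cast h0
  refine ⟨hMpos, ?_⟩
  rw [le_div_iff₀ hNr]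
  calc (1 / 2 : ℝ) * (q.choose σ : ℝ) * Real.exp (-(3 * q)) * ((ℓ : ℝ) / n) ^ σ * (n.choose ℓ : ℝ)
      = (q.choose σ : ℝ) * ((1 / 2 : ℝ)
          * (Real.exp (-(3 * q)) * ((ℓ : ℝ) / n) ^ σ * (n.choose ℓ : ℝ))) := by ring
    _ ≤ (q.choose σ : ℝ) * ((1 / 2 : ℝ) * ((n - q).choose (ℓ - σ) : ℝ)) := by
        apply mul_le_mul_of_nonneg_left _ hcqr.le
        apply mul_le_mul_of_nonneg_left hE2 (by norm_num)
    _ ≤ (q.choose σ : ℝ) * (M : ℝ) := mul_le_mul_of_nonneg_left hMhalf hcqr.le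

end KikAux

set_option maxHeartbeats 2000000 in
/-- **Even-`q` Kikuchi entry count.** Under the even-`q` Kikuchi setup, there is a
positive integer `D` such that for every `i ∈ [k]` and every `C ∈ H i`, the number
of ordered pairs `(S,T)` of `ℓ`-element subsets of `[n]` with `S ⊕ T = C` and
`A_i(S,T) = 1` is exactly `D`; moreover
`D/N ≥ (1/2) · C(q, q/2) · e^{-3q} · (ℓ/n)^{q/2}` where `N = C(n, ℓ)`. -/
theorem even_q_kikuchi_count (q k n ℓ : ℕ) (δ c : ℝ)
    (hq : 4 ≤ q) (heven : Even q)
    (H : Fin k → Finset (Finset (Fin n)))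
    (hmatch : ∀ i, IsMatching q (H i))
    (hsize : ∀ i, ((H i).card : ℝ) = δ * n)
    (hc : Real.exp 16 ≤ c)
    (hℓ : (ℓ : ℝ) = (n : ℝ) ^ (1 - 2 / (q : ℝ)) / c)
    (hℓq : q ≤ ℓ) (hℓn : 2 * ℓ ≤ n) :
    ∃ D : ℕ, 0 < D ∧
      (∀ i, ∀ C ∈ H i,
        (Finset.univ.filter
          (fun ST : Finset (Fin n) × Finset (Fin n) =>
            ST.1.card = ℓ ∧ ST.2.card = ℓ ∧ symmDiff ST.1 ST.2 = C ∧
            evenKikPred (H i) ℓ ST.1 ST.2)).card = D) ∧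
      (1 / 2 : ℝ) * (Nat.choose q (q / 2) : ℝ) * Real.exp (-(3 * q)) *
          ((ℓ : ℝ) / n) ^ (q / 2)
        ≤ (D : ℝ) / (Nat.choose n ℓ : ℝ) := by

  obtain ⟨t, ht⟩ := heven
  set σ := q / 2 with hσdef
  have hqσ : q = σ + σ := by omega
  have hσℓ : σ ≤ ℓ := by omega
  have hcards : ∀ i, ∀ C ∈ H i, C.card = q := fun i => (hmatch i).1
  have hdisj : ∀ i, Set.Pairwise ((H i : Set (Finset (Fin n)))) Disjoint :=
    fun i => (hmatch i).2
  by_cases hk : k = 0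
  · -- no hypergraphs at all
    subst hk
    set M := (n - q).choose (ℓ - σ) with hMdef
    have hana := KikAux.kik_analytic q σ ℓ n 0 M c hq hqσ hc hℓ hℓq hℓn
      (by simp) (by simp [hMdef])
    refine ⟨q.choose σ * M, Nat.mul_pos (Nat.choose_pos (by omega)) hana.1,
      fun i => i.elim0, ?_⟩
    have h2 := hana.2
    push_cast
    push_cast at h2
    exact h2
  · have hkpos : 0 < k := Nat.pos_of_ne_zero hk
    set i₀ : Fin k := ⟨0, hkpos⟩ with hi₀
    set m := (H i₀).card with hm
    have hsame : ∀ i, (H i).card = m := by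
      intro i
      have h1 := hsize i
      have h2 := hsize i₀
      have h3 : ((H i).card : ℝ) = ((H i₀).card : ℝ) := by rw [h1, h2]
      exact_mod_cast h3
    have hmq : m * q ≤ n := by
      have hbU : ((H i₀).biUnion id).card = ∑ C ∈ H i₀, (id C).card :=
        Finset.card_biUnion (fun x hx y hy hxy => hdisj i₀ hx hy hxy)
      have hsum : ∑ C ∈ H i₀, (id C).card = m * q := by
        calc ∑ C ∈ H i₀, (id C).card = ∑ _C ∈ H i₀, q :=
              Finset.sum_congr rfl (fun C hC => hcards i₀ C hC)
          _ = m * q := by rw [Finset.sum_const, smul_eq_mul, hm]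
      have hle : ((H i₀).biUnion id).card ≤ n := by
        have h := Finset.card_le_univ ((H i₀).biUnion id)
        rwa [Fintype.card_fin] at h
      omega
    set M := KikAux.kikF q σ (n - q) (m - 1) (ℓ - σ) with hMdef
    have hjq : (((m - 1 : ℕ)) : ℝ) * (q : ℝ) ≤ (n : ℝ) := by
      have h : (m - 1) * q ≤ n := le_trans (Nat.mul_le_mul_right q (Nat.sub_le m 1)) hmq
      exact_mod_cast h
    -- the union bound / exact value of M
    have hMbound : (n - q).choose (ℓ - σ)
        ≤ M + (m - 1) * (q.choose σ * ((n - q - q).choose (ℓ - σ - σ))) := by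
      rcases Nat.eq_zero_or_pos m with hm0 | hmpos
      · rw [hMdef, hm0]
        simp [KikAux.kikF]
      · obtain ⟨C₀, hC₀⟩ := Finset.card_pos.mp (hm ▸ hmpos)
        set F := (H i₀).erase C₀ with hF
        have hFcard : F.card = m - 1 := by rw [hF, card_erase_of_mem hC₀, hm]
        have hFq : ∀ B ∈ F, B.card = q := fun B hB => hcards i₀ B (mem_of_mem_erase hB)
        have hFsub : ∀ B ∈ F, B ⊆ Finset.univ \ C₀ := by
          intro B hB
          rw [subset_sdiff]
          exact ⟨subset_univ B,
            (hdisj i₀ (mem_of_mem_erase hB) hC₀ (ne_of_mem_erase hB)).symm.symm⟩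
        have hFdisj : ((F : Set (Finset (Fin n)))).Pairwise Disjoint :=
          (hdisj i₀).mono (by exact_mod_cast erase_subset C₀ (H i₀))
        have hcardV : (Finset.univ \ C₀ : Finset (Fin n)).card = n - q := by
          rw [card_sdiff_of_subset (subset_univ C₀), Finset.card_univ, Fintype.card_fin, hcards i₀ C₀ hC₀]
        have hgM : M = (((Finset.univ \ C₀).powersetCard (ℓ - σ)).filter
            (fun W => ∀ B ∈ F, (W ∩ B).card ≠ σ)).card := by
          have h := KikAux.g_eq q σ F (Finset.univ \ C₀) (ℓ - σ) hFq hFsub hFdisj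
          rw [hcardV, hFcard] at h
          rw [hMdef, ← h]
          apply KikAux.card_filter_irrel
        have hsplit := card_filter_add_card_filter_not
          (s := (Finset.univ \ C₀).powersetCard (ℓ - σ))
          (fun W => ∀ B ∈ F, (W ∩ B).card ≠ σ)
        have hPS : ((Finset.univ \ C₀).powersetCard (ℓ - σ)).card = (n - q).choose (ℓ - σ) := by
          rw [card_powersetCard, hcardV]
        have hbadle : (((Finset.univ \ C₀).powersetCard (ℓ - σ)).filter
              (fun W => ¬ ∀ B ∈ F, (W ∩ B).card ≠ σ)).card
            ≤ (m - 1) * (q.choose σ * ((n - q - q).choose (ℓ - σ - σ))) := by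
          calc (((Finset.univ \ C₀).powersetCard (ℓ - σ)).filter
                (fun W => ¬ ∀ B ∈ F, (W ∩ B).card ≠ σ)).card
              ≤ (F.biUnion (fun B => ((Finset.univ \ C₀).powersetCard (ℓ - σ)).filter
                  (fun W => (W ∩ B).card = σ))).card := by
                apply card_le_card
                intro W hW
                rw [mem_filter] at hW
                obtain ⟨hWPS, hne⟩ := hW
                push_neg at hne
                obtain ⟨B, hB, hBσ⟩ := hne
                exact mem_biUnion.mpr ⟨B, hB, mem_filter.mpr ⟨hWPS, hBσ⟩⟩
            _ ≤ ∑ B ∈ F, (((Finset.univ \ C₀).powersetCard (ℓ - σ)).filter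
                  (fun W => (W ∩ B).card = σ)).card := card_biUnion_le
            _ = ∑ B ∈ F, (q.choose σ * ((n - q - q).choose (ℓ - σ - σ))) := by
                apply Finset.sum_congr rfl
                intro B hB
                have h := KikAux.bad_card (Finset.univ \ C₀) B (hFsub B hB) (ℓ - σ) σ
                  (by omega) (by rw [hFq B hB]; omega)
                rw [hFq B hB] at h
                have hcard2 : ((Finset.univ \ C₀) \ B).card = n - q - q := by
                  rw [card_sdiff_of_subset (hFsub B hB), hcardV, hFq B hB]
                rw [hcard2] at h
                exact h
            _ = (m - 1) * (q.choose σ * ((n - q - q).choose (ℓ - σ - σ))) := by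
                rw [Finset.sum_const, smul_eq_mul, hFcard]
        calc (n - q).choose (ℓ - σ)
            = ((Finset.univ \ C₀).powersetCard (ℓ - σ)).card := hPS.symm
          _ = M + (((Finset.univ \ C₀).powersetCard (ℓ - σ)).filter
                (fun W => ¬ ∀ B ∈ F, (W ∩ B).card ≠ σ)).card := by
              rw [hgM]
              exact hsplit.symm
          _ ≤ M + (m - 1) * (q.choose σ * ((n - q - q).choose (ℓ - σ - σ))) :=
              Nat.add_le_add_left hbadle M
    have hana := KikAux.kik_analytic q σ ℓ n (m - 1) M c hq hqσ hc hℓ hℓq hℓn hjq hMbound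
    refine ⟨q.choose σ * M, Nat.mul_pos (Nat.choose_pos (by omega)) hana.1, ?_, ?_⟩
    · intro i C hC
      rw [KikAux.pairs_card q σ ℓ hqσ hσℓ (H i) (hcards i) (hdisj i) C hC]
      congr 1
      have hcardVC : (Finset.univ \ C : Finset (Fin n)).card = n - q := by
        rw [card_sdiff_of_subset (subset_univ C), Finset.card_univ, Fintype.card_fin, hcards i C hC]
      have hEq : ∀ B ∈ (H i).erase C, B.card = q :=
        fun B hB => hcards i B (mem_of_mem_erase hB)
      have hEsub : ∀ B ∈ (H i).erase C, B ⊆ Finset.univ \ C := by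
        intro B hB
        rw [subset_sdiff]
        exact ⟨subset_univ B, (hdisj i (mem_of_mem_erase hB) hC (ne_of_mem_erase hB))⟩
      have hEdisj : (((H i).erase C : Set (Finset (Fin n)))).Pairwise Disjoint :=
        (hdisj i).mono (by exact_mod_cast erase_subset C (H i))
      have h := KikAux.g_eq q σ ((H i).erase C) (Finset.univ \ C) (ℓ - σ) hEq hEsub hEdisj
      rw [hcardVC, card_erase_of_mem hC, hsame i] at h
      refine Eq.trans ?_ (Eq.trans h hMdef.symm)
      apply KikAux.card_filter_irrel
    · have h2 := hana.2
      push_cast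
      push_cast at h2
      exact h2
end
end
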